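/- arXiv:math/0406539 — 4 statements merged into one kernel-verified Lean document; each statement's English description precedes it below -/
import Mathlib

section
/- The number of ways to extend a partial vertical tableau ν' of shape 2×k (k < n) to a full vertical tableau ν of shape 2×n that is orthogonal to a fixed horizontal tableau μ of shape 2×n equals (n−k)! whenever μ is orthogonal to ν'; in particular this count is independent of μ. -/
open scoped Classical
open Finset

def IsHoriz (n : ℕ) (μ : Finset (Finset (Fin (2*n)))) : Prop :=
  μ.card = 2 ∧ (∀ r ∈ μ, r.card = n) ∧
  (μ : Set (Finset (Fin (2*n)))).PairwiseDisjoint id ∧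
  μ.sup id = Finset.univ

def IsVert (n : ℕ) (ν : Finset (Finset (Fin (2*n)))) : Prop :=
  (∀ c ∈ ν, c.card = 2) ∧
  (ν : Set (Finset (Fin (2*n)))).PairwiseDisjoint id ∧
  ν.sup id = Finset.univ

def IsPartial (n k : ℕ) (ν' : Finset (Finset (Fin (2*n)))) : Prop :=
  ν'.card = k ∧ (∀ c ∈ ν', c.card = 2) ∧
  (ν' : Set (Finset (Fin (2*n)))).PairwiseDisjoint id

def Orth (n : ℕ) (μ ν : Finset (Finset (Fin (2*n)))) : Prop :=
  ∀ r ∈ μ, ∀ c ∈ ν, (r ∩ c).card ≤ 1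

def OrthP (n : ℕ) (μ ν' : Finset (Finset (Fin (2*n)))) : Prop :=
  ∃ ν, IsVert n ν ∧ ν' ⊆ ν ∧ Orth n μ ν

def firstHalf (n : ℕ) : Finset (Fin (2*n)) :=
  Finset.univ.filter (fun x => (x : ℕ) < n)

def typeOf (n : ℕ) (μ : Finset (Finset (Fin (2*n)))) : ℕ :=
  μ.sup (fun r => (r ∩ firstHalf n).card)

def IsMatching {α : Type*} [DecidableEq α] (A B : Finset α) (M : Finset (Finset α)) : Prop :=
  (∀ c ∈ M, ∃ a ∈ A, ∃ b ∈ B, c = {a, b}) ∧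
  (M : Set (Finset α)).PairwiseDisjoint id ∧
  M.sup id = A ∪ B

lemma matching_count {α : Type*} [Fintype α] [DecidableEq α] : ∀ (m : ℕ) (A B : Finset α), Disjoint A B →
    A.card = m → B.card = m →
    (Finset.univ.filter (fun M => IsMatching A B M)).card = m.factorial := by
  intro m
  induction m with
  | zero =>
    intro A B hd hA hB
    rw [Finset.card_eq_zero] at hA hB
    subst hA; subst hB
    have : (Finset.univ.filter (fun M => IsMatching ∅ ∅ M)) = {(∅ : Finset (Finset α))} := by
      ext M
      rw [mem_filter, mem_singleton]
      simp only [mem_univ, true_and, IsMatching]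
      constructor
      · rintro ⟨h1, -, -⟩
        ext c
        simp only [Finset.notMem_empty, iff_false]
        intro hc
        obtain ⟨a, ha, -⟩ := h1 c hc
        exact absurd ha (Finset.notMem_empty a)
      · rintro rfl
        refine ⟨by simp, by simp, by simp⟩
    rw [this]; simp
  | succ m ih =>
    intro A B hd hA hB
    have hAne : A.Nonempty := Finset.card_pos.mp (by omega)
    obtain ⟨a, ha⟩ := hAne
    have key : (Finset.univ.filter (fun M => IsMatching A B M)) =
        B.biUnion (fun b => (Finset.univ.filter
          (fun M => IsMatching (A.erase a) (B.erase b) M)).image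
            (insert ({a, b} : Finset α))) := by
      ext M
      simp only [mem_filter, mem_univ, true_and, mem_biUnion, mem_image]
      constructor
      · rintro ⟨hcols, hpd, hsup⟩
        -- a is covered by some column
        have haM : a ∈ M.sup id := by rw [hsup]; exact Finset.mem_union_left _ ha
        rw [Finset.mem_sup] at haM
        obtain ⟨c, hcM, hac⟩ := haM
        obtain ⟨a', ha', b, hb, rfl⟩ := hcols c hcM
        have hab : a' ∉ B := fun h => Finset.disjoint_left.mp hd ha' h
        have haa' : a = a' := by
          rcases Finset.mem_insert.mp hac with h | h
          · exact h
          · exfalso; rw [Finset.mem_singleton] at h; subst h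
            exact Finset.disjoint_left.mp hd ha hb
        subst haa'
        refine ⟨b, hb, M.erase {a, b}, ⟨⟨?_, ?_, ?_⟩, ?_⟩⟩
        · -- columns of erase
          intro c hc
          obtain ⟨hcne, hcM'⟩ := Finset.mem_erase.mp hc
          obtain ⟨a'', ha'', b'', hb'', rfl⟩ := hcols c hcM'
          have hdisj := hpd hcM' hcM hcne
          refine ⟨a'', Finset.mem_erase.mpr ⟨?_, ha''⟩, b'', Finset.mem_erase.mpr ⟨?_, hb''⟩, rfl⟩
          · rintro rfl
            exact Finset.disjoint_left.mp hdisj (Finset.mem_insert_self _ _)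
              (Finset.mem_insert_self _ _)
          · rintro rfl
            exact Finset.disjoint_left.mp hdisj
              (Finset.mem_insert_of_mem (Finset.mem_singleton_self _))
              (Finset.mem_insert_of_mem (Finset.mem_singleton_self _))
        · exact Set.PairwiseDisjoint.subset hpd (by simp [Finset.erase_subset])
        · ext x
          rw [Finset.mem_sup]
          constructor
          · rintro ⟨c, hc, hx⟩
            obtain ⟨hcne, hcM'⟩ := Finset.mem_erase.mp hc
            obtain ⟨a'', ha'', b'', hb'', rfl⟩ := hcols c hcM'
            have hdisj := hpd hcM' hcM hcne
            rcases Finset.mem_insert.mp hx with rfl | hx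
            · refine Finset.mem_union_left _ (Finset.mem_erase.mpr ⟨?_, ha''⟩)
              rintro rfl
              exact Finset.disjoint_left.mp hdisj (Finset.mem_insert_self _ _)
                (Finset.mem_insert_self _ _)
            · rw [Finset.mem_singleton] at hx; subst hx
              refine Finset.mem_union_right _ (Finset.mem_erase.mpr ⟨?_, hb''⟩)
              rintro rfl
              exact Finset.disjoint_left.mp hdisj
                (Finset.mem_insert_of_mem (Finset.mem_singleton_self _))
                (Finset.mem_insert_of_mem (Finset.mem_singleton_self _))
          · intro hx
            have hxAB : x ∈ A ∪ B := by
              rcases Finset.mem_union.mp hx with h | h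
              · exact Finset.mem_union_left _ (Finset.mem_of_mem_erase h)
              · exact Finset.mem_union_right _ (Finset.mem_of_mem_erase h)
            rw [← hsup, Finset.mem_sup] at hxAB
            obtain ⟨c, hcM', hxc⟩ := hxAB
            refine ⟨c, Finset.mem_erase.mpr ⟨?_, hcM'⟩, hxc⟩
            rintro rfl
            rcases Finset.mem_insert.mp hxc with rfl | hxc
            · rcases Finset.mem_union.mp hx with h | h
              · exact (Finset.mem_erase.mp h).1 rfl
              · exact Finset.disjoint_left.mp hd ha (Finset.mem_of_mem_erase h)
            · rw [Finset.mem_singleton] at hxc; subst hxc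
              rcases Finset.mem_union.mp hx with h | h
              · exact Finset.disjoint_left.mp hd (Finset.mem_of_mem_erase h) hb
              · exact (Finset.mem_erase.mp h).1 rfl
        · exact Finset.insert_erase hcM
      · rintro ⟨b, hb, M₁, ⟨⟨hcols, hpd, hsup⟩, rfl⟩⟩
        have habne : a ≠ b := fun h => Finset.disjoint_left.mp hd ha (h ▸ hb)
        have hcolnotab : ∀ c ∈ M₁, a ∉ c ∧ b ∉ c := by
          intro c hc
          obtain ⟨a'', ha'', b'', hb'', rfl⟩ := hcols c hc
          constructor
          · intro h
            rcases Finset.mem_insert.mp h with rfl | h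
            · exact (Finset.mem_erase.mp ha'').1 rfl
            · rw [Finset.mem_singleton] at h; subst h
              exact Finset.disjoint_left.mp hd ha (Finset.mem_of_mem_erase hb'')
          · intro h
            rcases Finset.mem_insert.mp h with rfl | h
            · exact Finset.disjoint_left.mp hd (Finset.mem_of_mem_erase ha'') hb
            · rw [Finset.mem_singleton] at h; subst h
              exact (Finset.mem_erase.mp hb'').1 rfl
        have habnotM : ({a, b} : Finset α) ∉ M₁ := by
          intro h
          exact (hcolnotab _ h).1 (by simp)
        refine ⟨?_, ?_, ?_⟩
        · intro c hc
          rcases Finset.mem_insert.mp hc with rfl | hc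
          · exact ⟨a, ha, b, hb, rfl⟩
          · obtain ⟨a'', ha'', b'', hb'', rfl⟩ := hcols c hc
            exact ⟨a'', Finset.mem_of_mem_erase ha'', b'', Finset.mem_of_mem_erase hb'', rfl⟩
        · rw [Finset.coe_insert]
          refine Set.PairwiseDisjoint.insert hpd ?_
          intro c hc hne
          rw [Finset.disjoint_left]
          intro x hx hxc
          rcases Finset.mem_insert.mp hx with rfl | hx
          · exact (hcolnotab c hc).1 hxc
          · rw [Finset.mem_singleton] at hx; subst hx
            exact (hcolnotab c hc).2 hxc
        · rw [Finset.sup_insert, hsup]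
          ext x
          simp only [Finset.sup_eq_union, Finset.mem_union, Finset.mem_insert,
            Finset.mem_singleton, Finset.mem_erase, id]
          constructor
          · rintro (⟨rfl | rfl⟩ | h)
            · exact Or.inl ha
            · exact Or.inr hb
            · rcases h with ⟨-, h⟩ | ⟨-, h⟩
              · exact Or.inl h
              · exact Or.inr h
          · rintro (h | h)
            · by_cases hxa : x = a
              · exact Or.inl (Or.inl hxa)
              · exact Or.inr (Or.inl ⟨hxa, h⟩)
            · by_cases hxb : x = b
              · exact Or.inl (Or.inr hxb)
              · exact Or.inr (Or.inr ⟨hxb, h⟩)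
    rw [key, Finset.card_biUnion]
    · have hper : ∀ b ∈ B, ((Finset.univ.filter
          (fun M => IsMatching (A.erase a) (B.erase b) M)).image
            (insert ({a, b} : Finset α))).card = m.factorial := by
        intro b hb
        rw [Finset.card_image_of_injOn, ih (A.erase a) (B.erase b)
          (hd.mono (Finset.erase_subset _ _) (Finset.erase_subset _ _))
          (by rw [Finset.card_erase_of_mem ha, hA]; omega)
          (by rw [Finset.card_erase_of_mem hb, hB]; omega)]
        intro M₁ hM₁ M₂ hM₂ heq
        simp only [coe_filter, Set.mem_setOf_eq, mem_univ, true_and] at hM₁ hM₂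
        have hnot : ∀ (M : Finset (Finset α)), IsMatching (A.erase a) (B.erase b) M →
            ({a, b} : Finset α) ∉ M := by
          rintro M ⟨hcols, -, -⟩ h
          obtain ⟨a'', ha'', b'', hb'', heq'⟩ := hcols _ h
          have : a ∈ ({a'', b''} : Finset α) := heq' ▸ (by simp)
          rcases Finset.mem_insert.mp this with rfl | h'
          · exact (Finset.mem_erase.mp ha'').1 rfl
          · rw [Finset.mem_singleton] at h'; subst h'
            exact Finset.disjoint_left.mp hd ha (Finset.mem_of_mem_erase hb'')
        have h1 := hnot M₁ hM₁
        have h2 := hnot M₂ hM₂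
        rw [← Finset.erase_insert h1, ← Finset.erase_insert h2, heq]
      rw [Finset.sum_congr rfl hper, Finset.sum_const, hB, smul_eq_mul, Nat.factorial_succ]
    · intro b hb b' hb' hne
      rw [Function.onFun, Finset.disjoint_left]
      rintro M hM hM'
      simp only [mem_image, mem_filter, mem_univ, true_and] at hM hM'
      obtain ⟨M₁, hM₁, rfl⟩ := hM
      obtain ⟨M₂, hM₂, heq⟩ := hM'
      -- {a, b'} ∈ insert {a,b} M₁
      have : ({a, b'} : Finset α) ∈ insert ({a, b} : Finset α) M₁ := heq ▸ (by simp)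
      rcases Finset.mem_insert.mp this with h | h
      · have : b' ∈ ({a, b} : Finset α) := h ▸ (by simp)
        rcases Finset.mem_insert.mp this with rfl | h'
        · exact Finset.disjoint_left.mp hd ha hb'
        · rw [Finset.mem_singleton] at h'; exact hne h'.symm
      · obtain ⟨a'', ha'', b'', hb'', heq'⟩ := hM₁.1 _ h
        have : a ∈ ({a'', b''} : Finset α) := heq' ▸ (by simp)
        rcases Finset.mem_insert.mp this with rfl | h'
        · exact (Finset.mem_erase.mp ha'').1 rfl
        · rw [Finset.mem_singleton] at h'; subst h'
          exact Finset.disjoint_left.mp hd ha (Finset.mem_of_mem_erase hb'')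


theorem stmt0 (n k : ℕ) (hk : k < n)
    (μ ν' : Finset (Finset (Fin (2*n))))
    (hμ : IsHoriz n μ) (hν' : IsPartial n k ν') (horth : OrthP n μ ν') :
    (Finset.univ.filter (fun ν => IsVert n ν ∧ ν' ⊆ ν ∧ Orth n μ ν)).card
      = (n - k).factorial := by
  obtain ⟨hc2, hrows, hμdisj, hμsup⟩ := hμ
  obtain ⟨r₁, r₂, hne, rfl⟩ := Finset.card_eq_two.mp hc2
  have hd : Disjoint r₁ r₂ := hμdisj (by simp) (by simp) hne
  have huniv : r₁ ∪ r₂ = Finset.univ := by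
    rw [Finset.sup_insert, Finset.sup_singleton] at hμsup
    simpa using hμsup
  have hr₁ : r₁.card = n := hrows r₁ (by simp)
  have hr₂ : r₂.card = n := hrows r₂ (by simp)
  obtain ⟨hνk, hνcols2, hνpd⟩ := hν'
  obtain ⟨ν₀, hν₀vert, hsub₀, horth₀⟩ := horth
  -- splitting a column into its two row elements
  have col_split : ∀ c : Finset (Fin (2*n)), c.card = 2 → (r₁ ∩ c).card ≤ 1 →
      (r₂ ∩ c).card ≤ 1 → ∃ a ∈ r₁, ∃ b ∈ r₂, c = {a, b} := by
    intro c hc h1 h2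
    have hcover : (r₁ ∩ c) ∪ (r₂ ∩ c) = c := by
      rw [← Finset.union_inter_distrib_right, huniv, Finset.univ_inter]
    have hcard : (r₁ ∩ c).card = 1 ∧ (r₂ ∩ c).card = 1 := by
      have := Finset.card_union_le (r₁ ∩ c) (r₂ ∩ c)
      rw [hcover, hc] at this
      omega
    obtain ⟨a, ha⟩ := Finset.card_eq_one.mp hcard.1
    obtain ⟨b, hb⟩ := Finset.card_eq_one.mp hcard.2
    refine ⟨a, ?_, b, ?_, ?_⟩
    · have : a ∈ r₁ ∩ c := ha ▸ Finset.mem_singleton_self a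
      exact (Finset.mem_inter.mp this).1
    · have : b ∈ r₂ ∩ c := hb ▸ Finset.mem_singleton_self b
      exact (Finset.mem_inter.mp this).1
    · rw [← hcover, ha, hb]; ext x; simp
  have hν'cols : ∀ c ∈ ν', ∃ a ∈ r₁, ∃ b ∈ r₂, c = {a, b} := by
    intro c hc
    exact col_split c (hνcols2 c hc) (horth₀ r₁ (by simp) c (hsub₀ hc))
      (horth₀ r₂ (by simp) c (hsub₀ hc))
  have hint1 : ∀ a ∈ r₁, ∀ b ∈ r₂, r₁ ∩ ({a, b} : Finset (Fin (2*n))) = {a} := by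
    intro a ha b hb
    ext x
    simp only [Finset.mem_inter, Finset.mem_insert, Finset.mem_singleton]
    constructor
    · rintro ⟨hx, rfl | rfl⟩
      · rfl
      · exact absurd hb (Finset.disjoint_left.mp hd hx)
    · rintro rfl; exact ⟨ha, Or.inl rfl⟩
  have hint2 : ∀ a ∈ r₁, ∀ b ∈ r₂, r₂ ∩ ({a, b} : Finset (Fin (2*n))) = {b} := by
    intro a ha b hb
    ext x
    simp only [Finset.mem_inter, Finset.mem_insert, Finset.mem_singleton]
    constructor
    · rintro ⟨hx, rfl | rfl⟩
      · exact absurd hx (Finset.disjoint_left.mp hd ha)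
      · rfl
    · rintro rfl; exact ⟨hb, Or.inr rfl⟩
  set S := ν'.sup id with hS
  have hSmem : ∀ x, x ∈ S ↔ ∃ c ∈ ν', x ∈ c := fun x => Finset.mem_sup
  have hr1S : (r₁ ∩ S).card = k := by
    have h1 : r₁ ∩ S = ν'.biUnion (fun c => r₁ ∩ c) := by
      ext x
      simp only [Finset.mem_inter, Finset.mem_biUnion, hSmem x]
      tauto
    rw [h1, Finset.card_biUnion]
    · rw [← hνk]
      rw [Finset.sum_congr rfl (fun c hc => ?_), Finset.sum_const, smul_eq_mul, mul_one]
      obtain ⟨a, ha, b, hb, rfl⟩ := hν'cols c hc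
      rw [hint1 a ha b hb, Finset.card_singleton]
    · intro c hc c' hc' hcc
      exact (hνpd hc hc' hcc).mono Finset.inter_subset_right Finset.inter_subset_right
  have hr2S : (r₂ ∩ S).card = k := by
    have h1 : r₂ ∩ S = ν'.biUnion (fun c => r₂ ∩ c) := by
      ext x
      simp only [Finset.mem_inter, Finset.mem_biUnion, hSmem x]
      tauto
    rw [h1, Finset.card_biUnion]
    · rw [← hνk]
      rw [Finset.sum_congr rfl (fun c hc => ?_), Finset.sum_const, smul_eq_mul, mul_one]
      obtain ⟨a, ha, b, hb, rfl⟩ := hν'cols c hc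
      rw [hint2 a ha b hb, Finset.card_singleton]
    · intro c hc c' hc' hcc
      exact (hνpd hc hc' hcc).mono Finset.inter_subset_right Finset.inter_subset_right
  set A := r₁ \ S with hAdef
  set B := r₂ \ S with hBdef
  have hAcard : A.card = n - k := by
    rw [hAdef, ← Finset.sdiff_inter_self_left, Finset.card_sdiff_of_subset Finset.inter_subset_left,
      hr1S, hr₁]
  have hBcard : B.card = n - k := by
    rw [hBdef, ← Finset.sdiff_inter_self_left, Finset.card_sdiff_of_subset Finset.inter_subset_left,
      hr2S, hr₂]
  have hAB : Disjoint A B := hd.mono Finset.sdiff_subset Finset.sdiff_subset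
  have hABu : A ∪ B = Finset.univ \ S := by
    rw [hAdef, hBdef, ← Finset.union_sdiff_distrib, huniv]
  rw [← matching_count (n - k) A B hAB hAcard hBcard]
  apply Finset.card_bij (fun ν _ => ν \ ν')
  · -- maps into matchings
    intro ν hν
    rw [Finset.mem_filter] at hν ⊢
    obtain ⟨-, ⟨hcols2, hpd, hsup⟩, hsub, horthν⟩ := hν
    have hcolsAB : ∀ c ∈ ν \ ν', ∃ a ∈ A, ∃ b ∈ B, c = {a, b} := by
      intro c hc
      obtain ⟨hcν, hcν'⟩ := Finset.mem_sdiff.mp hc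
      obtain ⟨a, ha, b, hb, rfl⟩ := col_split c (hcols2 c hcν)
        (horthν r₁ (by simp) _ hcν) (horthν r₂ (by simp) _ hcν)
      have hnotS : ∀ x ∈ ({a, b} : Finset (Fin (2*n))), x ∉ S := by
        intro x hx hxS
        obtain ⟨c', hc', hxc'⟩ := (hSmem x).mp hxS
        have hcc' : ({a, b} : Finset (Fin (2*n))) ≠ c' := fun h => hcν' (h ▸ hc')
        exact Finset.disjoint_left.mp (hpd hcν (hsub hc') hcc') hx hxc'
      exact ⟨a, Finset.mem_sdiff.mpr ⟨ha, hnotS a (by simp)⟩,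
             b, Finset.mem_sdiff.mpr ⟨hb, hnotS b (by simp)⟩, rfl⟩
    refine ⟨Finset.mem_univ _, hcolsAB, hpd.subset (Finset.coe_subset.mpr Finset.sdiff_subset), ?_⟩
    ext x
    rw [Finset.mem_sup]
    constructor
    · rintro ⟨c, hc, hx⟩
      obtain ⟨a, haA, b, hbB, rfl⟩ := hcolsAB c hc
      rcases Finset.mem_insert.mp hx with rfl | hx
      · exact Finset.mem_union_left _ haA
      · rw [Finset.mem_singleton] at hx; subst hx
        exact Finset.mem_union_right _ hbB
    · intro hx
      have hxS : x ∉ S := by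
        have : x ∈ Finset.univ \ S := hABu ▸ hx
        exact (Finset.mem_sdiff.mp this).2
      have : x ∈ ν.sup id := hsup ▸ Finset.mem_univ x
      rw [Finset.mem_sup] at this
      obtain ⟨c, hc, hxc⟩ := this
      refine ⟨c, Finset.mem_sdiff.mpr ⟨hc, fun hcν' => ?_⟩, hxc⟩
      exact hxS ((hSmem x).mpr ⟨c, hcν', hxc⟩)
  · -- injective
    intro ν₁ h₁ ν₂ h₂ heq
    rw [Finset.mem_filter] at h₁ h₂
    have e₁ : ν' ∪ (ν₁ \ ν') = ν₁ := Finset.union_sdiff_of_subset h₁.2.2.1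
    have e₂ : ν' ∪ (ν₂ \ ν') = ν₂ := Finset.union_sdiff_of_subset h₂.2.2.1
    rw [← e₁, ← e₂, heq]
  · -- surjective
    intro M hM
    rw [Finset.mem_filter] at hM
    obtain ⟨-, hMcols, hMpd, hMsup⟩ := hM
    have hMsubAB : ∀ c ∈ M, c ⊆ A ∪ B := by
      intro c hc
      rw [← hMsup]
      exact Finset.le_sup (f := id) hc
    have hMnotS : ∀ c ∈ M, ∀ x ∈ c, x ∉ S := by
      intro c hc x hx
      have : x ∈ Finset.univ \ S := hABu ▸ hMsubAB c hc hx
      exact (Finset.mem_sdiff.mp this).2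
    have hν'subS : ∀ c ∈ ν', c ⊆ S := fun c hc => Finset.le_sup (f := id) hc
    have hMν' : ∀ c ∈ M, c ∉ ν' := by
      intro c hc hcν'
      obtain ⟨a, haA, b, hbB, rfl⟩ := hMcols c hc
      exact hMnotS _ hc a (by simp) (hν'subS _ hcν' (by simp))
    refine ⟨ν' ∪ M, Finset.mem_filter.mpr ⟨Finset.mem_univ _, ⟨?_, ?_, ?_⟩,
      Finset.subset_union_left, ?_⟩, ?_⟩
    · -- card 2
      intro c hc
      rcases Finset.mem_union.mp hc with hc | hc
      · exact hνcols2 c hc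
      · obtain ⟨a, haA, b, hbB, rfl⟩ := hMcols c hc
        rw [Finset.card_insert_of_notMem, Finset.card_singleton]
        rw [Finset.mem_singleton]
        rintro rfl
        exact Finset.disjoint_left.mp hAB haA hbB
    · -- pairwise disjoint
      rw [Finset.coe_union]
      rw [Set.pairwiseDisjoint_union]
      refine ⟨hνpd, hMpd, ?_⟩
      intro c hc c' hc' _
      rw [Finset.mem_coe] at hc hc'
      rw [Finset.disjoint_left]
      intro x hx hx'
      exact hMnotS c' hc' x hx' (hν'subS c hc hx)
    · -- sup = univ
      rw [Finset.sup_union, Finset.sup_eq_union, ← hS, hMsup, hABu,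
        Finset.union_sdiff_of_subset (Finset.subset_univ S)]
    · -- orthogonality
      intro r hr c hc
      rcases Finset.mem_union.mp hc with hc | hc
      · exact horth₀ r hr c (hsub₀ hc)
      · obtain ⟨a, haA, b, hbB, rfl⟩ := hMcols c hc
        have ha1 : a ∈ r₁ := (Finset.mem_sdiff.mp haA).1
        have hb2 : b ∈ r₂ := (Finset.mem_sdiff.mp hbB).1
        rcases Finset.mem_insert.mp hr with rfl | hr
        · rw [hint1 a ha1 b hb2, Finset.card_singleton]
        · rw [Finset.mem_singleton] at hr; subst hr
          rw [hint2 a ha1 b hb2, Finset.card_singleton]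
    · -- (ν' ∪ M) \ ν' = M
      ext c
      simp only [Finset.mem_sdiff, Finset.mem_union]
      constructor
      · rintro ⟨hc | hc, hc'⟩
        · exact absurd hc hc'
        · exact hc
      · intro hc
        exact ⟨Or.inr hc, hMν' c hc⟩
end

section
/- Let τ : H → ℚ be a function on horizontal tableaux of shape 2×n such that for every vertical tableau ν of shape 2×n, the sum of τ(μ) over all μ orthogonal to ν is 0. Then for every partial tableau ν' of shape 2×k (k < n), the sum of τ(μ) over all μ orthogonal to ν' is also 0. -/
open scoped Classical
open Finset

section Aux
variable {n : ℕ}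

/-- support card of a partial tableau -/
lemma partial_sup_card {k : ℕ} {ν' : Finset (Finset (Fin (2*n)))}
    (h : IsPartial n k ν') : (ν'.sup id).card = 2 * k := by
  obtain ⟨hc, h2, hd⟩ := h
  rw [Finset.sup_eq_biUnion ν' id, Finset.card_biUnion
    (fun x hx y hy hxy => hd (by simpa using hx) (by simpa using hy) hxy)]
  calc ∑ c ∈ ν', (id c).card = ∑ c ∈ ν', 2 := Finset.sum_congr rfl h2
    _ = 2 * k := by simp [hc, mul_comm]

lemma horiz_rows {μ : Finset (Finset (Fin (2*n)))} (h : IsHoriz n μ) :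
    ∃ r1 r2 : Finset (Fin (2*n)), r1 ≠ r2 ∧ μ = {r1, r2} ∧ Disjoint r1 r2 ∧
      r1.card = n ∧ r2.card = n ∧ r1 ∪ r2 = Finset.univ := by
  obtain ⟨hc, hcard, hd, hsup⟩ := h
  obtain ⟨r1, r2, hne, rfl⟩ := Finset.card_eq_two.1 hc
  refine ⟨r1, r2, hne, rfl, hd (by simp) (by simp) hne, hcard r1 (by simp),
    hcard r2 (by simp), ?_⟩
  simpa using hsup

lemma aux_union_inter {r1 r2 : Finset (Fin (2*n))} (hu : r1 ∪ r2 = Finset.univ)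
    (hd : Disjoint r1 r2) (c : Finset (Fin (2*n))) :
    (r1 ∩ c).card + (r2 ∩ c).card = c.card := by
  have hd2 : Disjoint (r1 ∩ c) (r2 ∩ c) :=
    hd.mono Finset.inter_subset_left Finset.inter_subset_left
  rw [← Finset.card_union_of_disjoint hd2,
      ← Finset.union_inter_distrib_right, hu, Finset.univ_inter]

lemma inter_pair_le_one {r s : Finset (Fin (2*n))} (hd : Disjoint r s)
    {a b : Fin (2*n)} (hb : b ∈ s) : (r ∩ ({a,b} : Finset (Fin (2*n)))).card ≤ 1 := by
  have hsub : r ∩ ({a,b} : Finset (Fin (2*n))) ⊆ {a} := by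
    intro x hx
    obtain ⟨hxr, hxc⟩ := Finset.mem_inter.1 hx
    rcases Finset.mem_insert.1 hxc with h | h
    · simpa using h
    · have hxb : x = b := Finset.mem_singleton.1 h
      exact absurd hxr (Finset.disjoint_right.1 hd (hxb ▸ hb))
  calc (r ∩ ({a,b} : Finset (Fin (2*n)))).card ≤ ({a} : Finset _).card :=
        Finset.card_le_card hsub
    _ = 1 := rfl

/-- inserting a crossing pair preserves orthogonality -/
lemma orth_insert_pair {μ ν' : Finset (Finset (Fin (2*n)))} {r1 r2 : Finset (Fin (2*n))}
    (hμ : μ = {r1, r2}) (hd : Disjoint r1 r2) (ho : Orth n μ ν')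
    {a b : Fin (2*n)} (ha : a ∈ r1) (hb : b ∈ r2) :
    Orth n μ (insert {a,b} ν') := by
  intro r hr c hc
  rcases Finset.mem_insert.1 hc with rfl | hc
  · subst hμ
    rcases Finset.mem_insert.1 hr with rfl | hr
    · exact inter_pair_le_one hd hb
    · rw [Finset.mem_singleton.1 hr, Finset.pair_comm a b]
      exact inter_pair_le_one hd.symm ha
  · exact ho r hr c hc

/-- each column of an orthogonal partial tableau crosses each row exactly once -/
lemma cross_exact {μ : Finset (Finset (Fin (2*n)))} {r1 r2 : Finset (Fin (2*n))}
    (hμ : μ = {r1, r2}) (hd : Disjoint r1 r2) (hu : r1 ∪ r2 = Finset.univ)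
    {c : Finset (Fin (2*n))} (hc2 : c.card = 2)
    (h1 : (r1 ∩ c).card ≤ 1) (h2 : (r2 ∩ c).card ≤ 1) :
    (r1 ∩ c).card = 1 ∧ (r2 ∩ c).card = 1 := by
  have := aux_union_inter hu hd c
  omega

lemma row_inter_sup {k : ℕ} {ν' : Finset (Finset (Fin (2*n)))}
    {r : Finset (Fin (2*n))}
    (hν' : IsPartial n k ν')
    (hone : ∀ c ∈ ν', (r ∩ c).card = 1) :
    (r ∩ ν'.sup id).card = k := by
  obtain ⟨hc, h2, hd⟩ := hν'
  rw [Finset.sup_eq_biUnion ν' id]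
  have : r ∩ ν'.biUnion id = ν'.biUnion (fun c => r ∩ c) := by
    ext x; simp [Finset.mem_biUnion]; tauto
  rw [this, Finset.card_biUnion]
  · rw [Finset.sum_congr rfl hone]; simp [hc]
  · intro x hx y hy hxy
    exact Disjoint.mono inf_le_right inf_le_right
      (hd (by simpa using hx) (by simpa using hy) hxy)

/-- main card computation: leftover in each row -/
lemma row_sdiff_card {k : ℕ} {μ ν' : Finset (Finset (Fin (2*n)))}
    {r1 r2 : Finset (Fin (2*n))}
    (hμ : IsHoriz n μ) (hμeq : μ = {r1, r2}) (hd : Disjoint r1 r2)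
    (hu : r1 ∪ r2 = Finset.univ) (hr1 : r1.card = n) (hr2 : r2.card = n)
    (hν' : IsPartial n k ν') (ho : Orth n μ ν') :
    k ≤ n ∧ (r1 \ ν'.sup id).card = n - k ∧ (r2 \ ν'.sup id).card = n - k := by
  have hone : ∀ c ∈ ν', (r1 ∩ c).card = 1 ∧ (r2 ∩ c).card = 1 := by
    intro c hc
    exact cross_exact hμeq hd hu (hν'.2.1 c hc)
      (ho r1 (by rw [hμeq]; simp) c hc) (ho r2 (by rw [hμeq]; simp) c hc)
  have h1 : (r1 ∩ ν'.sup id).card = k :=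
    row_inter_sup hν' (fun c hc => (hone c hc).1)
  have h2 : (r2 ∩ ν'.sup id).card = k :=
    row_inter_sup hν' (fun c hc => (hone c hc).2)
  have hk : k ≤ n := by
    calc k = (r1 ∩ ν'.sup id).card := h1.symm
      _ ≤ r1.card := Finset.card_le_card (Finset.inter_subset_left)
      _ = n := hr1
  refine ⟨hk, ?_, ?_⟩
  · have : r1 \ ν'.sup id = r1 \ (r1 ∩ ν'.sup id) := by
      ext x; simp
    rw [this, Finset.card_sdiff_of_subset (Finset.inter_subset_left), h1, hr1]
  · have : r2 \ ν'.sup id = r2 \ (r2 ∩ ν'.sup id) := by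
      ext x; simp
    rw [this, Finset.card_sdiff_of_subset (Finset.inter_subset_left), h2, hr2]

/-- a partial tableau with n columns is vertical -/
lemma partial_full_vert {ν' : Finset (Finset (Fin (2*n)))}
    (h : IsPartial n n ν') : IsVert n ν' := by
  refine ⟨h.2.1, h.2.2, ?_⟩
  apply Finset.eq_univ_of_card
  rw [partial_sup_card h, Fintype.card_fin]

/-- inserting a valid new pair to a partial tableau -/
lemma partial_insert {k : ℕ} {ν' : Finset (Finset (Fin (2*n)))}
    (hν' : IsPartial n k ν') {c : Finset (Fin (2*n))} (hc2 : c.card = 2)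
    (hdisj : Disjoint c (ν'.sup id)) : IsPartial n (k+1) (insert c ν') := by
  obtain ⟨hc, h2, hd⟩ := hν'
  have hnotmem : c ∉ ν' := by
    intro hmem
    have hsub : c ⊆ ν'.sup id := fun x hx => Finset.mem_sup.2 ⟨c, hmem, hx⟩
    have : c = ∅ := Finset.eq_empty_of_forall_notMem
      (fun x hx => Finset.disjoint_left.1 hdisj hx (hsub hx))
    simp [this] at hc2
  refine ⟨by rw [Finset.card_insert_of_notMem hnotmem, hc], ?_, ?_⟩
  · intro d hd'
    rcases Finset.mem_insert.1 hd' with rfl | hd'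
    · exact hc2
    · exact h2 d hd'
  · rw [Finset.coe_insert]
    apply Set.PairwiseDisjoint.insert hd
    intro d hd' hne
    have hsub : d ⊆ ν'.sup id := fun x hx => Finset.mem_sup.2 ⟨d, by simpa using hd', hx⟩
    exact (hdisj.mono_right hsub)

/-- extension lemma: orthogonal partial tableaux extend to vertical ones -/
lemma extend_aux : ∀ m k (μ ν' : Finset (Finset (Fin (2*n)))), k + m = n →
    IsPartial n k ν' → IsHoriz n μ → Orth n μ ν' →
    ∃ ν, IsVert n ν ∧ ν' ⊆ ν ∧ Orth n μ ν := by
  intro m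
  induction m with
  | zero =>
    intro k μ ν' hkm hν' _ ho
    refine ⟨ν', ?_, Finset.Subset.refl _, ho⟩
    exact partial_full_vert (by rwa [← Nat.add_zero k, hkm] at hν')
  | succ m ih =>
    intro k μ ν' hkm hν' hμ ho
    obtain ⟨r1, r2, hne, hμeq, hd, hr1, hr2, hu⟩ := horiz_rows hμ
    obtain ⟨hk, hc1, hc2⟩ := row_sdiff_card hμ hμeq hd hu hr1 hr2 hν' ho
    have hm1 : n - k = m + 1 := by omega
    have hne1 : (r1 \ ν'.sup id).Nonempty := by
      rw [← Finset.card_pos, hc1, hm1]; omega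
    have hne2 : (r2 \ ν'.sup id).Nonempty := by
      rw [← Finset.card_pos, hc2, hm1]; omega
    obtain ⟨a, ha⟩ := hne1
    obtain ⟨b, hb⟩ := hne2
    obtain ⟨ha1, haS⟩ := Finset.mem_sdiff.1 ha
    obtain ⟨hb2, hbS⟩ := Finset.mem_sdiff.1 hb
    have hab : a ≠ b := fun h => Finset.disjoint_left.1 hd ha1 (h ▸ hb2)
    have hcd : Disjoint ({a,b} : Finset (Fin (2*n))) (ν'.sup id) := by
      simp only [Finset.disjoint_left, Finset.mem_insert, Finset.mem_singleton]
      rintro x (rfl | rfl) h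
      · exact haS h
      · exact hbS h
    have hpart : IsPartial n (k+1) (insert {a,b} ν') :=
      partial_insert hν' (Finset.card_pair hab) hcd
    have horth : Orth n μ (insert {a,b} ν') := orth_insert_pair hμeq hd ho ha1 hb2
    obtain ⟨ν, hν, hsub, ho'⟩ := ih (k+1) μ (insert {a,b} ν') (by omega) hpart hμ horth
    exact ⟨ν, hν, Finset.Subset.trans (Finset.subset_insert _ _) hsub, ho'⟩

lemma orth_mono {μ ν ν' : Finset (Finset (Fin (2*n)))} (hsub : ν' ⊆ ν)
    (ho : Orth n μ ν) : Orth n μ ν' := fun r hr c hc => ho r hr c (hsub hc)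

lemma orthP_iff {k : ℕ} {μ ν' : Finset (Finset (Fin (2*n)))}
    (hμ : IsHoriz n μ) (hν' : IsPartial n k ν') (hk : k ≤ n) :
    OrthP n μ ν' ↔ Orth n μ ν' := by
  constructor
  · rintro ⟨ν, _, hsub, ho⟩; exact orth_mono hsub ho
  · intro ho
    exact extend_aux (n - k) k μ ν' (by omega) hν' hμ ho

end Aux

section Count
variable {n : ℕ}

lemma count_pairs {k : ℕ} {μ ν' : Finset (Finset (Fin (2*n)))}
    (hμ : IsHoriz n μ) (hν' : IsPartial n k ν') (ho : Orth n μ ν') (hkn : k < n) :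
    (Finset.univ.filter (fun c : Finset (Fin (2*n)) =>
      (c.card = 2 ∧ Disjoint c (ν'.sup id)) ∧ (IsHoriz n μ ∧ OrthP n μ (insert c ν')))).card
      = (n-k)*(n-k) := by
  obtain ⟨r1, r2, hne, hμeq, hd, hr1, hr2, hu⟩ := horiz_rows hμ
  obtain ⟨hk, hc1, hc2⟩ := row_sdiff_card hμ hμeq hd hu hr1 hr2 hν' ho
  have hset : Finset.univ.filter (fun c : Finset (Fin (2*n)) =>
      (c.card = 2 ∧ Disjoint c (ν'.sup id)) ∧ (IsHoriz n μ ∧ OrthP n μ (insert c ν')))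
      = ((r1 \ ν'.sup id) ×ˢ (r2 \ ν'.sup id)).image
          (fun p => ({p.1, p.2} : Finset (Fin (2*n)))) := by
    ext c
    simp only [Finset.mem_filter, Finset.mem_univ, true_and, Finset.mem_image,
      Finset.mem_product]
    constructor
    · rintro ⟨⟨hc2', hcd⟩, -, horthP⟩
      have hpart := partial_insert hν' hc2' hcd
      have horth : Orth n μ (insert c ν') := (orthP_iff hμ hpart (by omega)).1 horthP
      have h1 : (r1 ∩ c).card ≤ 1 :=
        horth r1 (by rw [hμeq]; simp) c (Finset.mem_insert_self _ _)
      have h2 : (r2 ∩ c).card ≤ 1 :=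
        horth r2 (by rw [hμeq]; simp) c (Finset.mem_insert_self _ _)
      obtain ⟨he1, he2⟩ := cross_exact hμeq hd hu hc2' h1 h2
      obtain ⟨a, ha⟩ := Finset.card_eq_one.1 he1
      obtain ⟨b, hb⟩ := Finset.card_eq_one.1 he2
      have haM : a ∈ r1 ∩ c := ha ▸ Finset.mem_singleton_self a
      have hbM : b ∈ r2 ∩ c := hb ▸ Finset.mem_singleton_self b
      obtain ⟨har, hac⟩ := Finset.mem_inter.1 haM
      obtain ⟨hbr, hbc⟩ := Finset.mem_inter.1 hbM
      have hcu : c = (r1 ∩ c) ∪ (r2 ∩ c) := by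
        rw [← Finset.union_inter_distrib_right, hu, Finset.univ_inter]
      refine ⟨(a, b), ⟨Finset.mem_sdiff.2 ⟨har, fun h => Finset.disjoint_left.1 hcd hac h⟩,
        Finset.mem_sdiff.2 ⟨hbr, fun h => Finset.disjoint_left.1 hcd hbc h⟩⟩, ?_⟩
      show ({a, b} : Finset (Fin (2*n))) = c
      rw [hcu, ha, hb]
      rfl
    · rintro ⟨⟨a, b⟩, ⟨ha, hb⟩, rfl⟩
      obtain ⟨ha1, haS⟩ := Finset.mem_sdiff.1 ha
      obtain ⟨hb2, hbS⟩ := Finset.mem_sdiff.1 hb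
      have hab : a ≠ b := fun h => Finset.disjoint_left.1 hd ha1 (h ▸ hb2)
      have hcd : Disjoint ({a,b} : Finset (Fin (2*n))) (ν'.sup id) := by
        simp only [Finset.disjoint_left, Finset.mem_insert, Finset.mem_singleton]
        rintro x (rfl | rfl) h
        · exact haS h
        · exact hbS h
      have hc2' : ({a,b} : Finset (Fin (2*n))).card = 2 := Finset.card_pair hab
      have hpart := partial_insert hν' hc2' hcd
      refine ⟨⟨hc2', hcd⟩, hμ, ?_⟩
      exact (orthP_iff hμ hpart (by omega)).2 (orth_insert_pair hμeq hd ho ha1 hb2)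
  rw [hset, Finset.card_image_of_injOn, Finset.card_product, hc1, hc2]
  rintro ⟨a, b⟩ hp ⟨a', b'⟩ hq h
  simp only [Finset.mem_coe, Finset.mem_product] at hp hq
  obtain ⟨ha, hb⟩ := hp
  obtain ⟨ha', hb'⟩ := hq
  have ha1 := (Finset.mem_sdiff.1 ha).1
  have hb2 := (Finset.mem_sdiff.1 hb).1
  have ha1' := (Finset.mem_sdiff.1 ha').1
  have hb2' := (Finset.mem_sdiff.1 hb').1
  simp only at h
  have haa : a = a' := by
    have : a ∈ ({a', b'} : Finset (Fin (2*n))) := h ▸ Finset.mem_insert_self a {b}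
    rcases Finset.mem_insert.1 this with h' | h'
    · exact h'
    · exact absurd ha1 (fun hc => Finset.disjoint_left.1 hd hc
        ((Finset.mem_singleton.1 h') ▸ hb2'))
  have hbb : b = b' := by
    have : b ∈ ({a', b'} : Finset (Fin (2*n))) := h ▸ (by simp)
    rcases Finset.mem_insert.1 this with h' | h'
    · exact absurd (h' ▸ hb2) (fun hc => Finset.disjoint_left.1 hd ha1' hc)
    · exact Finset.mem_singleton.1 h'
  simp [haa, hbb]

lemma main_aux {τ : Finset (Finset (Fin (2*n))) → ℚ}
    (hτ : ∀ ν, IsVert n ν →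
      ∑ μ ∈ Finset.univ.filter (fun μ => IsHoriz n μ ∧ Orth n μ ν), τ μ = 0) :
    ∀ m k ν', k + m = n → IsPartial n k ν' →
      ∑ μ ∈ Finset.univ.filter (fun μ => IsHoriz n μ ∧ OrthP n μ ν'), τ μ = 0 := by
  intro m
  induction m with
  | zero =>
    intro k ν' hkm hν'
    have hνn : IsPartial n n ν' := by rwa [show k = n by omega] at hν'
    have hvert : IsVert n ν' := partial_full_vert hνn
    have hfeq : Finset.univ.filter (fun μ => IsHoriz n μ ∧ OrthP n μ ν')
        = Finset.univ.filter (fun μ => IsHoriz n μ ∧ Orth n μ ν') := by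
      apply Finset.filter_congr
      intro μ _
      constructor
      · rintro ⟨hμ, hP⟩; exact ⟨hμ, (orthP_iff hμ hνn le_rfl).1 hP⟩
      · rintro ⟨hμ, hO⟩; exact ⟨hμ, (orthP_iff hμ hνn le_rfl).2 hO⟩
    rw [hfeq]
    exact hτ ν' hvert
  | succ m ih =>
    intro k ν' hkm hν'
    have hkn : k < n := by omega
    set C := Finset.univ.filter
      (fun c : Finset (Fin (2*n)) => c.card = 2 ∧ Disjoint c (ν'.sup id)) with hC
    have hzero : ∑ c ∈ C,
        (∑ μ ∈ Finset.univ.filter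
          (fun μ => IsHoriz n μ ∧ OrthP n μ (insert c ν')), τ μ) = 0 := by
      apply Finset.sum_eq_zero
      intro c hc
      obtain ⟨hc2, hcd⟩ := (Finset.mem_filter.1 hc).2
      exact ih (k+1) (insert c ν') (by omega) (partial_insert hν' hc2 hcd)
    have hcount : ∀ μ : Finset (Finset (Fin (2*n))),
        (C.filter (fun c => IsHoriz n μ ∧ OrthP n μ (insert c ν'))).card
        = if IsHoriz n μ ∧ OrthP n μ ν' then (m+1)*(m+1) else 0 := by
      intro μ
      by_cases hμ : IsHoriz n μ
      · by_cases ho : Orth n μ ν'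
        · have hP : OrthP n μ ν' := (orthP_iff hμ hν' (by omega)).2 ho
          rw [if_pos ⟨hμ, hP⟩, hC, Finset.filter_filter]
          rw [count_pairs hμ hν' ho hkn, show n - k = m + 1 by omega]
        · have hnP : ¬ OrthP n μ ν' := fun hP => ho ((orthP_iff hμ hν' (by omega)).1 hP)
          rw [if_neg (fun h => hnP h.2)]
          rw [Finset.card_eq_zero]
          apply Finset.filter_false_of_mem
          intro c hc
          obtain ⟨hc2, hcd⟩ := (Finset.mem_filter.1 hc).2
          rintro ⟨-, hP⟩
          have hpart := partial_insert hν' hc2 hcd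
          have := (orthP_iff hμ hpart (by omega)).1 hP
          exact ho (orth_mono (Finset.subset_insert _ _) this)
      · rw [if_neg (fun h => hμ h.1), Finset.card_eq_zero]
        apply Finset.filter_false_of_mem
        intro c _ h
        exact hμ h.1
    have hswap : ∑ c ∈ C,
        (∑ μ ∈ Finset.univ.filter
          (fun μ => IsHoriz n μ ∧ OrthP n μ (insert c ν')), τ μ)
        = ∑ μ : Finset (Finset (Fin (2*n))),
            ((C.filter (fun c => IsHoriz n μ ∧ OrthP n μ (insert c ν'))).card : ℚ) * τ μ := by
      have : ∀ c ∈ C, (∑ μ ∈ Finset.univ.filter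
          (fun μ => IsHoriz n μ ∧ OrthP n μ (insert c ν')), τ μ)
          = ∑ μ : Finset (Finset (Fin (2*n))),
              if IsHoriz n μ ∧ OrthP n μ (insert c ν') then τ μ else 0 := by
        intro c _
        rw [Finset.sum_filter]
      rw [Finset.sum_congr rfl this, Finset.sum_comm]
      apply Finset.sum_congr rfl
      intro μ _
      rw [← Finset.sum_filter, Finset.sum_const, nsmul_eq_mul]
    rw [hswap] at hzero
    have hfinal : ∑ μ : Finset (Finset (Fin (2*n))),
        ((C.filter (fun c => IsHoriz n μ ∧ OrthP n μ (insert c ν'))).card : ℚ) * τ μ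
        = ((m+1)*(m+1) : ℚ) *
          ∑ μ ∈ Finset.univ.filter (fun μ => IsHoriz n μ ∧ OrthP n μ ν'), τ μ := by
      rw [Finset.mul_sum, Finset.sum_filter]
      apply Finset.sum_congr rfl
      intro μ _
      rw [hcount μ]
      by_cases h : IsHoriz n μ ∧ OrthP n μ ν'
      · rw [if_pos h, if_pos h]; push_cast; ring
      · rw [if_neg h, if_neg h]; simp
    rw [hfinal] at hzero
    have hne : ((m+1)*(m+1) : ℚ) ≠ 0 := by positivity
    exact (mul_eq_zero.1 hzero).resolve_left hne

end Count

theorem stmt5 (n : ℕ) (τ : Finset (Finset (Fin (2*n))) → ℚ)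
    (hτ : ∀ ν, IsVert n ν →
      ∑ μ ∈ Finset.univ.filter (fun μ => IsHoriz n μ ∧ Orth n μ ν), τ μ = 0) :
    ∀ k < n, ∀ ν', IsPartial n k ν' →
      ∑ μ ∈ Finset.univ.filter (fun μ => IsHoriz n μ ∧ OrthP n μ ν'), τ μ = 0 := by
  intro k hk ν' hν'
  exact main_aux hτ (n - k) k ν' (by omega) hν'
end

section
/- Let τ : H → ℚ be a function on horizontal tableaux of shape 2×n such that for every vertical tableau ν, the sum of τ(μ) over all μ ⊥ ν is 0. Define the type of μ as max(|r₁ ∩ {1,…,n}|, |r₂ ∩ {1,…,n}|). Then for every a with ⌈n/2⌉ ≤ a ≤ n, the sum of τ(μ) over all horizontal tableaux μ of type a equals 0. -/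
open scoped Classical
open Finset

variable {α : Type*} [Fintype α] [DecidableEq α]

noncomputable def SM (C D : Finset α) (k : ℕ) : Finset (Finset (Finset α)) :=
  Finset.univ.filter (fun ν => ν.card = k ∧ (ν : Set (Finset α)).PairwiseDisjoint id ∧
    ∀ p ∈ ν, ∃ x ∈ C, ∃ y ∈ D, p = {x, y})

lemma mem_SM {C D : Finset α} {k : ℕ} {ν : Finset (Finset α)} :
    ν ∈ SM C D k ↔ ν.card = k ∧ (ν : Set (Finset α)).PairwiseDisjoint id ∧
      ∀ p ∈ ν, ∃ x ∈ C, ∃ y ∈ D, p = {x, y} := by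
  simp [SM]

lemma SM_symm (C D : Finset α) (k : ℕ) : SM C D k = SM D C k := by
  ext ν
  simp only [mem_SM, and_congr_right_iff]
  intro _ _
  constructor <;>
  · intro h p hp
    obtain ⟨x, hx, y, hy, rfl⟩ := h p hp
    exact ⟨y, hy, x, hx, Finset.pair_comm x y⟩

lemma SM_zero (C D : Finset α) : SM C D 0 = {∅} := by
  ext ν
  simp only [mem_SM, Finset.card_eq_zero, Finset.mem_singleton]
  constructor
  · rintro ⟨rfl, -, -⟩; rfl
  · rintro rfl; simp [Set.PairwiseDisjoint, Set.Pairwise]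

lemma SM_card : ∀ (m : ℕ) (C D : Finset α), Disjoint C D → C.card = m → ∀ k,
    (SM C D k).card = k.factorial * m.choose k * D.card.choose k := by
  intro m
  induction m with
  | zero =>
    intro C D hdis hC k
    rw [Finset.card_eq_zero] at hC; subst hC
    cases k with
    | zero => simp [SM_zero]
    | succ k =>
      rw [Nat.choose_zero_succ]
      convert Finset.card_empty
      · ext ν
        simp only [mem_SM, Finset.notMem_empty, iff_false, not_and]
        intro hcard _ 
        intro hall
        have : ν.Nonempty := Finset.card_pos.mp (by omega)
        obtain ⟨p, hp⟩ := this
        obtain ⟨x, hx, -⟩ := hall p hp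
        simp at hx
      · ring
  | succ m ih =>
    intro C D hdis hC k
    cases k with
    | zero => simp [SM_zero]
    | succ k =>
      have hCne : C.Nonempty := Finset.card_pos.mp (by omega)
      obtain ⟨x, hx⟩ := hCne
      have hxD : x ∉ D := fun h => (Finset.disjoint_left.mp hdis hx) h
      have hsplit := Finset.card_filter_add_card_filter_not
        (s := SM C D (k+1)) (p := fun ν => ∀ p ∈ ν, x ∉ p)
      have hC' : (C.erase x).card = m := by
        rw [Finset.card_erase_of_mem hx, hC]; rfl
      have hdis' : Disjoint (C.erase x) D := hdis.mono_left (Finset.erase_subset _ _)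
      have claim1 : (SM C D (k+1)).filter (fun ν => ∀ p ∈ ν, x ∉ p)
          = SM (C.erase x) D (k+1) := by
        ext ν
        simp only [Finset.mem_filter, mem_SM]
        constructor
        · rintro ⟨⟨h1, h2, h3⟩, h4⟩
          refine ⟨h1, h2, fun p hp => ?_⟩
          obtain ⟨a, ha, b, hb, rfl⟩ := h3 p hp
          have hax : a ≠ x := by rintro rfl; exact h4 _ hp (by simp)
          exact ⟨a, Finset.mem_erase.mpr ⟨hax, ha⟩, b, hb, rfl⟩
        · rintro ⟨h1, h2, h3⟩
          refine ⟨⟨h1, h2, fun p hp => ?_⟩, fun p hp hxp => ?_⟩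
          · obtain ⟨a, ha, b, hb, rfl⟩ := h3 p hp
            exact ⟨a, Finset.mem_of_mem_erase ha, b, hb, rfl⟩
          · obtain ⟨a, ha, b, hb, rfl⟩ := h3 p hp
            rw [Finset.mem_insert, Finset.mem_singleton] at hxp
            rcases hxp with rfl | rfl
            · exact (Finset.mem_erase.mp ha).1 rfl
            · exact hxD hb
      have claim2 : (SM C D (k+1)).filter (fun ν => ¬ ∀ p ∈ ν, x ∉ p)
          = D.biUnion (fun y => (SM C D (k+1)).filter (fun ν => ({x,y} : Finset α) ∈ ν)) := by
        ext ν
        simp only [Finset.mem_filter, Finset.mem_biUnion]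
        constructor
        · rintro ⟨hν, hno⟩
          push_neg at hno
          obtain ⟨p, hp, hxp⟩ := hno
          obtain ⟨a, ha, b, hb, rfl⟩ := (mem_SM.mp hν).2.2 p hp
          rw [Finset.mem_insert, Finset.mem_singleton] at hxp
          rcases hxp with rfl | rfl
          · exact ⟨b, hb, hν, hp⟩
          · exact absurd hb hxD
        · rintro ⟨y, hy, hν, hpair⟩
          refine ⟨hν, ?_⟩
          push_neg
          exact ⟨{x,y}, hpair, by simp⟩
      have hdisjU : ∀ y₁ ∈ D, ∀ y₂ ∈ D, y₁ ≠ y₂ →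
          Disjoint ((SM C D (k+1)).filter (fun ν => ({x,y₁} : Finset α) ∈ ν))
            ((SM C D (k+1)).filter (fun ν => ({x,y₂} : Finset α) ∈ ν)) := by
        intro y₁ h₁ y₂ h₂ hne
        rw [Finset.disjoint_left]
        intro ν hν₁ hν₂
        simp only [Finset.mem_filter] at hν₁ hν₂
        obtain ⟨hν, hp₁⟩ := hν₁
        obtain ⟨-, hp₂⟩ := hν₂
        have h2 := (mem_SM.mp hν).2.1
        by_cases he : ({x,y₁} : Finset α) = {x,y₂}
        · have : y₁ ∈ ({x,y₂} : Finset α) := he ▸ (by simp)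
          rw [Finset.mem_insert, Finset.mem_singleton] at this
          rcases this with rfl | rfl
          · exact hxD h₁
          · exact hne rfl
        · have hd := h2 hp₁ hp₂ he
          have hx1 : x ∈ ({x,y₁} : Finset α) := by simp
          have hx2 : x ∈ ({x,y₂} : Finset α) := by simp
          exact Finset.disjoint_left.mp hd hx1 hx2
      have hcards : ∀ y ∈ D, ((SM C D (k+1)).filter (fun ν => ({x,y} : Finset α) ∈ ν)).card
          = k.factorial * m.choose k * (D.card - 1).choose k := by
        intro y hy
        have hyx : y ≠ x := fun h => hxD (h ▸ hy)
        have hDe : (D.erase y).card = D.card - 1 := Finset.card_erase_of_mem hy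
        have hdise : Disjoint (C.erase x) (D.erase y) :=
          hdis'.mono_right (Finset.erase_subset _ _)
        rw [← hDe, ← ih (C.erase x) (D.erase y) hdise hC' k]
        apply Finset.card_nbij' (fun ν => ν.erase {x,y}) (fun ν'' => insert {x,y} ν'')
        · intro ν hν
          simp only [Finset.mem_coe, Finset.mem_filter] at hν
          obtain ⟨hν, hpair⟩ := hν
          obtain ⟨h1, h2, h3⟩ := mem_SM.mp hν
          refine mem_SM.mpr ⟨?_, ?_, ?_⟩
          · rw [Finset.card_erase_of_mem hpair, h1]; rfl
          · exact h2.subset (fun p hp => Finset.mem_coe.mpr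
              (Finset.mem_of_mem_erase (Finset.mem_coe.mp hp)))
          · intro p hp
            have hpν := Finset.mem_of_mem_erase hp
            have hpne := (Finset.mem_erase.mp hp).1
            obtain ⟨a, ha, b, hb, rfl⟩ := h3 p hpν
            have hdisab : Disjoint (id ({a,b} : Finset α)) (id ({x,y} : Finset α)) :=
              h2 (Finset.mem_coe.mpr hpν) (Finset.mem_coe.mpr hpair) hpne
            have haxy : a ∉ ({x,y} : Finset α) :=
              Finset.disjoint_left.mp hdisab (by simp)
            have hbxy : b ∉ ({x,y} : Finset α) :=
              Finset.disjoint_left.mp hdisab (by simp)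
            refine ⟨a, Finset.mem_erase.mpr ⟨fun h => haxy (by simp [h]), ha⟩,
              b, Finset.mem_erase.mpr ⟨fun h => hbxy (by simp [h]), hb⟩, rfl⟩
        · intro ν'' hν''
          obtain ⟨h1, h2, h3⟩ := mem_SM.mp hν''
          have havoid : ∀ p ∈ ν'', x ∉ p ∧ y ∉ p := by
            intro p hp
            obtain ⟨a, ha, b, hb, rfl⟩ := h3 p hp
            have hax : a ≠ x := (Finset.mem_erase.mp ha).1
            have haC : a ∈ C := Finset.mem_of_mem_erase ha
            have hby : b ≠ y := (Finset.mem_erase.mp hb).1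
            have hbD : b ∈ D := Finset.mem_of_mem_erase hb
            constructor
            · simp only [Finset.mem_insert, Finset.mem_singleton]
              push_neg
              exact ⟨fun h => hax h.symm, fun h => hxD (h ▸ hbD)⟩
            · simp only [Finset.mem_insert, Finset.mem_singleton]
              push_neg
              exact ⟨fun h => (Finset.disjoint_left.mp hdis haC) (h ▸ hy),
                fun h => hby h.symm⟩
          have hnotmem : ({x,y} : Finset α) ∉ ν'' := by
            intro h
            exact (havoid _ h).1 (by simp)
          simp only [Finset.mem_coe, Finset.mem_filter]
          constructor
          · refine mem_SM.mpr ⟨?_, ?_, ?_⟩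
            · rw [Finset.card_insert_of_notMem hnotmem, h1]
            · rw [Finset.coe_insert]
              refine h2.insert (fun p hp hne => ?_)
              have := havoid p (Finset.mem_coe.mp hp)
              simp only [id]
              rw [Finset.disjoint_left]
              intro z hz1 hz2
              simp only [Finset.mem_insert, Finset.mem_singleton] at hz1
              rcases hz1 with rfl | rfl
              · exact this.1 hz2
              · exact this.2 hz2
            · intro p hp
              rw [Finset.mem_insert] at hp
              rcases hp with rfl | hp
              · exact ⟨x, hx, y, hy, rfl⟩
              · obtain ⟨a, ha, b, hb, rfl⟩ := h3 p hp
                exact ⟨a, Finset.mem_of_mem_erase ha, b, Finset.mem_of_mem_erase hb, rfl⟩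
          · exact Finset.mem_insert_self _ _
        · intro ν hν
          simp only [Finset.mem_coe, Finset.mem_filter] at hν
          exact Finset.insert_erase hν.2
        · intro ν'' hν''
          obtain ⟨h1, h2, h3⟩ := mem_SM.mp hν''
          apply Finset.erase_insert
          intro h
          obtain ⟨a, ha, b, hb, hpe⟩ := h3 _ h
          have hax : a ≠ x := (Finset.mem_erase.mp ha).1
          have hbD : b ∈ D := Finset.mem_of_mem_erase hb
          have : x ∈ ({a, b} : Finset α) := by rw [← hpe]; simp
          simp only [Finset.mem_insert, Finset.mem_singleton] at this
          rcases this with rfl | rfl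
          · exact hax rfl
          · exact hxD hbD
      have harith : ∀ d : ℕ, (k+1).factorial * (m.choose (k+1)) * (d.choose (k+1)) +
          d * (k.factorial * m.choose k * (d - 1).choose k)
          = (k+1).factorial * ((m+1).choose (k+1)) * (d.choose (k+1)) := by
        intro d
        cases d with
        | zero => simp
        | succ e =>
          have h1 : (e+1) * e.choose k = (e+1).choose (k+1) * (k+1) :=
            Nat.add_one_mul_choose_eq e k
          have h2 : (m+1).choose (k+1) = m.choose k + m.choose (k+1) :=
            Nat.choose_succ_succ m k
          have h3 : (k+1).factorial = (k+1) * k.factorial := Nat.factorial_succ k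
          have h4 : e + 1 - 1 = e := rfl
          rw [h4, h2, h3]
          have h5 : (e+1) * (k.factorial * m.choose k * e.choose k)
              = (k+1) * k.factorial * (m.choose k * (e+1).choose (k+1)) := by
            calc (e+1) * (k.factorial * m.choose k * e.choose k)
                = k.factorial * m.choose k * ((e+1) * e.choose k) := by ring
              _ = k.factorial * m.choose k * ((e+1).choose (k+1) * (k+1)) := by rw [h1]
              _ = (k+1) * k.factorial * (m.choose k * (e+1).choose (k+1)) := by ring
          rw [h5]
          ring
      calc (SM C D (k+1)).card
          = ((SM C D (k+1)).filter (fun ν => ∀ p ∈ ν, x ∉ p)).card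
            + ((SM C D (k+1)).filter (fun ν => ¬ ∀ p ∈ ν, x ∉ p)).card := hsplit.symm
        _ = (SM (C.erase x) D (k+1)).card
            + ∑ y ∈ D, ((SM C D (k+1)).filter (fun ν => ({x,y} : Finset α) ∈ ν)).card := by
            rw [claim1, claim2, Finset.card_biUnion hdisjU]
        _ = (k+1).factorial * (m.choose (k+1)) * (D.card.choose (k+1))
            + D.card * (k.factorial * m.choose k * (D.card - 1).choose k) := by
            rw [ih (C.erase x) D hdis' hC' (k+1), Finset.sum_congr rfl hcards,
              Finset.sum_const, smul_eq_mul]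
        _ = (k+1).factorial * ((m+1).choose (k+1)) * (D.card.choose (k+1)) := harith D.card

lemma pair_split {β : Type*} [DecidableEq β] [Fintype β] {r p : Finset β}
    (hp2 : p.card = 2) (h1 : (r ∩ p).card ≤ 1) (h2 : (rᶜ ∩ p).card ≤ 1) :
    ∃ x ∈ r, ∃ y ∈ rᶜ, p = {x, y} := by
  have hun : (r ∩ p) ∪ (rᶜ ∩ p) = p := by
    ext z
    simp only [Finset.mem_union, Finset.mem_inter, Finset.mem_compl]
    tauto
  have hdis : Disjoint (r ∩ p) (rᶜ ∩ p) := by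
    rw [Finset.disjoint_left]
    intro z hz1 hz2
    exact (Finset.mem_compl.mp (Finset.mem_inter.mp hz2).1) (Finset.mem_inter.mp hz1).1
  have hsum : (r ∩ p).card + (rᶜ ∩ p).card = 2 := by
    rw [← Finset.card_union_of_disjoint hdis, hun, hp2]
  have e1 : (r ∩ p).card = 1 := by omega
  have e2 : (rᶜ ∩ p).card = 1 := by omega
  obtain ⟨x, hx⟩ := Finset.card_eq_one.mp e1
  obtain ⟨y, hy⟩ := Finset.card_eq_one.mp e2
  have hxr : x ∈ r := (Finset.mem_inter.mp (hx ▸ Finset.mem_singleton_self x)).1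
  have hyr : y ∈ rᶜ := (Finset.mem_inter.mp (hy ▸ Finset.mem_singleton_self y)).1
  refine ⟨x, hxr, y, hyr, ?_⟩
  have hsub : p ⊆ {x, y} := by
    intro z hz
    have : z ∈ (r ∩ p) ∪ (rᶜ ∩ p) := by rw [hun]; exact hz
    rw [hx, hy] at this
    simpa using this
  apply Finset.eq_of_subset_of_card_le hsub
  rw [hp2]
  exact Finset.card_insert_le _ _ |>.trans (by simp)

lemma horiz_struct {n : ℕ} {μ : Finset (Finset (Fin (2*n)))} (h : IsHoriz n μ) :
    ∃ r, μ = {r, rᶜ} ∧ r.card = n := by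
  obtain ⟨h2, hrows, hdis, hsup⟩ := h
  obtain ⟨r, s, hrs, rfl⟩ := Finset.card_eq_two.mp h2
  have hr : r.card = n := hrows r (by simp)
  have hs : s.card = n := hrows s (by simp)
  have hd : Disjoint r s := hdis (by simp) (by simp) hrs
  refine ⟨r, ?_, hr⟩
  have hsc : s = rᶜ := by
    apply Finset.eq_of_subset_of_card_le
    · intro z hz
      exact Finset.mem_compl.mpr (fun hzr => Finset.disjoint_left.mp hd hzr hz)
    · rw [Finset.card_compl, hs, hr, Fintype.card_fin]
      omega
  rw [hsc]

lemma sup_card_of_pairs {n : ℕ} {ν : Finset (Finset (Fin (2*n)))}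
    (hdis : (ν : Set (Finset (Fin (2*n)))).PairwiseDisjoint id)
    (h2 : ∀ p ∈ ν, p.card = 2) : (ν.sup id).card = 2 * ν.card := by
  rw [Finset.sup_eq_biUnion, Finset.card_biUnion (fun p hp q hq hne => hdis hp hq hne)]
  simp only [id]
  rw [Finset.sum_congr rfl h2, Finset.sum_const, smul_eq_mul, Nat.mul_comm]

lemma orth_vert_iff {n : ℕ} {r : Finset (Fin (2*n))} (hr : r.card = n)
    {ν : Finset (Finset (Fin (2*n)))} :
    (IsVert n ν ∧ Orth n {r, rᶜ} ν) ↔ ν ∈ SM r rᶜ n := by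
  constructor
  · rintro ⟨⟨hc2, hdis, hsup⟩, horth⟩
    refine mem_SM.mpr ⟨?_, hdis, ?_⟩
    · have := sup_card_of_pairs hdis hc2
      rw [hsup, Finset.card_univ, Fintype.card_fin] at this
      omega
    · intro p hp
      exact pair_split (hc2 p hp) (horth r (by simp) p hp) (horth rᶜ (by simp) p hp)
  · intro hν
    obtain ⟨hcard, hdis, hpairs⟩ := mem_SM.mp hν
    have hc2 : ∀ p ∈ ν, p.card = 2 := by
      intro p hp
      obtain ⟨x, hx, y, hy, rfl⟩ := hpairs p hp
      exact Finset.card_pair (fun h => (Finset.mem_compl.mp hy) (h ▸ hx))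
    refine ⟨⟨hc2, hdis, ?_⟩, ?_⟩
    · apply Finset.eq_univ_of_card
      rw [sup_card_of_pairs hdis hc2, hcard, Fintype.card_fin]
    · intro ρ hρ p hp
      obtain ⟨x, hx, y, hy, rfl⟩ := hpairs p hp
      rw [Finset.mem_insert, Finset.mem_singleton] at hρ
      have key : ∀ s : Finset (Fin (2*n)), ∀ a b : Fin (2*n), a ∈ s → b ∉ s →
          (s ∩ ({a, b} : Finset (Fin (2*n)))).card ≤ 1 := by
        intro s a b ha hb
        have : s ∩ ({a, b} : Finset (Fin (2*n))) ⊆ {a} := by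
          intro z hz
          simp only [Finset.mem_inter, Finset.mem_insert, Finset.mem_singleton] at hz
          rcases hz.2 with rfl | rfl
          · simp
          · exact absurd hz.1 hb
        calc _ ≤ ({a} : Finset (Fin (2*n))).card := Finset.card_le_card this
          _ = 1 := Finset.card_singleton a
      rcases hρ with rfl | rfl
      · exact key ρ x y hx (Finset.mem_compl.mp hy)
      · rw [Finset.pair_comm]
        exact key _ y x hy (by simpa using hx)

lemma SM_inter_card {C D : Finset α} (hdis : Disjoint C D) {k : ℕ}
    {ν : Finset (Finset α)} (hν : ν ∈ SM C D k) : (C ∩ ν.sup id).card = k := by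
  obtain ⟨hcard, hd, hpairs⟩ := mem_SM.mp hν
  have h1 : C ∩ ν.sup id = ν.biUnion (fun p => C ∩ p) := by
    rw [Finset.sup_eq_biUnion]
    ext z
    simp only [Finset.mem_inter, Finset.mem_biUnion, id]
    tauto
  rw [h1, Finset.card_biUnion]
  · rw [Finset.sum_congr rfl (g := fun _ => 1), Finset.sum_const, smul_eq_mul,
      mul_one, hcard]
    intro p hp
    obtain ⟨x, hx, y, hy, rfl⟩ := hpairs p hp
    have : C ∩ ({x, y} : Finset α) = {x} := by
      ext z
      simp only [Finset.mem_inter, Finset.mem_insert, Finset.mem_singleton]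
      constructor
      · rintro ⟨hzC, rfl | rfl⟩
        · rfl
        · exact absurd hzC (Finset.disjoint_right.mp hdis hy)
      · rintro rfl; exact ⟨hx, Or.inl rfl⟩
    rw [this, Finset.card_singleton]
  · intro p hp q hq hne
    exact Finset.disjoint_left.mpr fun z hz1 hz2 =>
      Finset.disjoint_left.mp (hd hp hq hne) (Finset.mem_inter.mp hz1).2
        (Finset.mem_inter.mp hz2).2

lemma ext_count {n k : ℕ} {r : Finset (Fin (2*n))} (hr : r.card = n)
    {ν' : Finset (Finset (Fin (2*n)))} (hν' : ν' ∈ SM r rᶜ k) :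
    (Finset.univ.filter (fun ν => IsVert n ν ∧ ν' ⊆ ν ∧ Orth n {r, rᶜ} ν)).card
      = (n - k).factorial := by
  classical
  have hdisr : Disjoint r rᶜ := disjoint_compl_right
  have hkr : (r ∩ ν'.sup id).card = k := SM_inter_card hdisr hν'
  have hkc : (rᶜ ∩ ν'.sup id).card = k :=
    SM_inter_card (disjoint_compl_left) (SM_symm r rᶜ k ▸ hν')
  have hkn : k ≤ n := by
    have h := Finset.card_le_card (Finset.inter_subset_left (s₁ := r) (s₂ := ν'.sup id))
    rw [hkr, hr] at h
    exact h
  set A := r \ ν'.sup id with hA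
  set B := rᶜ \ ν'.sup id with hB
  have hAcard : A.card = n - k := by
    have h := Finset.card_inter_add_card_sdiff r (ν'.sup id)
    rw [hkr, hr, ← hA] at h
    omega
  have hBcard : B.card = n - k := by
    have h := Finset.card_inter_add_card_sdiff rᶜ (ν'.sup id)
    have hc : rᶜ.card = n := by
      rw [Finset.card_compl, hr, Fintype.card_fin]; omega
    rw [hkc, hc, ← hB] at h
    omega
  have hABdis : Disjoint A B :=
    hdisr.mono (Finset.sdiff_subset) (Finset.sdiff_subset)
  have hfeq : Finset.univ.filter (fun ν => IsVert n ν ∧ ν' ⊆ ν ∧ Orth n {r, rᶜ} ν)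
      = (SM r rᶜ n).filter (fun ν => ν' ⊆ ν) := by
    ext ν
    simp only [Finset.mem_filter, Finset.mem_univ, true_and]
    constructor
    · rintro ⟨h1, h2, h3⟩
      exact ⟨(orth_vert_iff hr).mp ⟨h1, h3⟩, h2⟩
    · rintro ⟨h1, h2⟩
      have := (orth_vert_iff hr).mpr h1
      exact ⟨this.1, h2, this.2⟩
  rw [hfeq]
  have hbij : ((SM r rᶜ n).filter (fun ν => ν' ⊆ ν)).card = (SM A B (n - k)).card := by
    apply Finset.card_nbij' (fun ν => ν \ ν') (fun ν'' => ν' ∪ ν'')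
    · intro ν hν
      simp only [Finset.mem_coe, Finset.mem_filter] at hν
      obtain ⟨hν, hsub⟩ := hν
      obtain ⟨h1, h2, h3⟩ := mem_SM.mp hν
      refine mem_SM.mpr ⟨?_, ?_, ?_⟩
      · rw [Finset.card_sdiff_of_subset hsub, h1]
        congr 1
        exact (mem_SM.mp hν').1.symm ▸ rfl
      · exact h2.subset (fun p hp => Finset.mem_coe.mpr
          (Finset.mem_sdiff.mp (Finset.mem_coe.mp hp)).1)
      · intro p hp
        obtain ⟨hpν, hpν'⟩ := Finset.mem_sdiff.mp hp
        obtain ⟨x, hx, y, hy, rfl⟩ := h3 p hpν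
        have hnotsup : ∀ z ∈ ({x, y} : Finset (Fin (2*n))), z ∉ ν'.sup id := by
          intro z hz hzsup
          rw [Finset.mem_sup] at hzsup
          obtain ⟨q, hq, hzq⟩ := hzsup
          have hqν : q ∈ ν := hsub hq
          have hne : ({x, y} : Finset (Fin (2*n))) ≠ q := fun h => hpν' (h ▸ hq)
          exact Finset.disjoint_left.mp (h2 (Finset.mem_coe.mpr hpν)
            (Finset.mem_coe.mpr hqν) hne) hz hzq
        exact ⟨x, Finset.mem_sdiff.mpr ⟨hx, hnotsup x (by simp)⟩,
          y, Finset.mem_sdiff.mpr ⟨hy, hnotsup y (by simp)⟩, rfl⟩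
    · intro ν'' hν''
      obtain ⟨h1, h2, h3⟩ := mem_SM.mp hν''
      obtain ⟨g1, g2, g3⟩ := mem_SM.mp hν'
      have havoid : ∀ p ∈ ν'', ∀ z ∈ p, z ∉ ν'.sup id := by
        intro p hp z hz
        obtain ⟨x, hx, y, hy, rfl⟩ := h3 p hp
        simp only [Finset.mem_insert, Finset.mem_singleton] at hz
        rcases hz with rfl | rfl
        · exact (Finset.mem_sdiff.mp hx).2
        · exact (Finset.mem_sdiff.mp hy).2
      have hdisνν : Disjoint ν' ν'' := by
        rw [Finset.disjoint_left]
        intro p hpν' hpν''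
        obtain ⟨x, hx, y, hy, rfl⟩ := h3 p hpν''
        exact havoid _ hpν'' x (by simp) (Finset.mem_sup.mpr ⟨_, hpν', by simp⟩)
      simp only [Finset.mem_coe, Finset.mem_filter]
      refine ⟨mem_SM.mpr ⟨?_, ?_, ?_⟩, Finset.subset_union_left⟩
      · rw [Finset.card_union_of_disjoint hdisνν, h1, g1]
        omega
      · rw [Finset.coe_union]
        apply g2.union (h2)
        intro p hpν' q hpν'' hne
        simp only [id]
        rw [Finset.disjoint_right]
        intro z hzq hzp
        exact havoid q hpν'' z hzq (Finset.mem_sup.mpr ⟨p, hpν', hzp⟩)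
      · intro p hp
        rcases Finset.mem_union.mp hp with hp' | hp''
        · exact g3 p hp'
        · obtain ⟨x, hx, y, hy, rfl⟩ := h3 p hp''
          exact ⟨x, (Finset.mem_sdiff.mp hx).1, y, (Finset.mem_sdiff.mp hy).1, rfl⟩
    · intro ν hν
      simp only [Finset.mem_coe, Finset.mem_filter] at hν
      exact Finset.union_sdiff_of_subset hν.2
    · intro ν'' hν''
      obtain ⟨h1, h2, h3⟩ := mem_SM.mp hν''
      apply Finset.union_sdiff_cancel_left
      rw [Finset.disjoint_left]
      intro p hpν' hpν''
      obtain ⟨x, hx, y, hy, rfl⟩ := h3 p hpν''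
      exact (Finset.mem_sdiff.mp hx).2 (Finset.mem_sup.mpr ⟨_, hpν', by simp⟩)
  rw [hbij, SM_card (n - k) A B hABdis hAcard (n - k), hBcard, Nat.choose_self]
  ring

lemma swap_count {β γ : Type*} [Fintype β] (V : Finset γ) (f : β → ℚ) (P : β → γ → Prop) :
    ∑ ν ∈ V, ∑ μ ∈ Finset.univ.filter (fun μ => P μ ν), f μ
      = ∑ μ : β, ((V.filter (fun ν => P μ ν)).card : ℚ) * f μ := by
  classical
  have h1 : ∀ ν ∈ V, ∑ μ ∈ Finset.univ.filter (fun μ => P μ ν), f μ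
      = ∑ μ : β, if P μ ν then f μ else 0 := fun ν _ => (Finset.sum_filter _ _)
  rw [Finset.sum_congr rfl h1, Finset.sum_comm]
  refine Finset.sum_congr rfl fun μ _ => ?_
  rw [← Finset.sum_filter, Finset.sum_const, nsmul_eq_mul]

lemma partial_zero {n : ℕ} (τ : Finset (Finset (Fin (2*n))) → ℚ)
    (hτ : ∀ ν, IsVert n ν →
      ∑ μ ∈ Finset.univ.filter (fun μ => IsHoriz n μ ∧ Orth n μ ν), τ μ = 0)
    {k : ℕ} {ν' : Finset (Finset (Fin (2*n)))} (hν' : IsPartial n k ν') :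
    ∑ μ ∈ Finset.univ.filter (fun μ => IsHoriz n μ ∧ OrthP n μ ν'), τ μ = 0 := by
  classical
  set V := Finset.univ.filter (fun ν => IsVert n ν ∧ ν' ⊆ ν) with hV
  have h0 : ∑ ν ∈ V, ∑ μ ∈ Finset.univ.filter (fun μ => IsHoriz n μ ∧ Orth n μ ν), τ μ = 0 :=
    Finset.sum_eq_zero fun ν hν => hτ ν (Finset.mem_filter.mp hν).2.1
  have hstep : ∀ ν ∈ V, ∑ μ ∈ Finset.univ.filter (fun μ => IsHoriz n μ ∧ Orth n μ ν), τ μ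
      = ∑ μ : Finset (Finset (Fin (2*n))), if IsHoriz n μ ∧ Orth n μ ν then τ μ else 0 :=
    fun ν _ => Finset.sum_filter _ _
  rw [Finset.sum_congr rfl hstep, Finset.sum_comm] at h0
  have hstep2 : ∀ μ : Finset (Finset (Fin (2*n))),
      (∑ ν ∈ V, if IsHoriz n μ ∧ Orth n μ ν then τ μ else 0)
      = ((V.filter (fun ν => IsHoriz n μ ∧ Orth n μ ν)).card : ℚ) * τ μ := fun μ => by
    rw [← Finset.sum_filter, Finset.sum_const, nsmul_eq_mul]
  rw [Finset.sum_congr rfl (fun μ _ => hstep2 μ)] at h0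
  have h0' := h0
  have key : ∀ μ, ((V.filter (fun ν => IsHoriz n μ ∧ Orth n μ ν)).card : ℚ) * τ μ
      = ((n - k).factorial : ℚ) * (if IsHoriz n μ ∧ OrthP n μ ν' then τ μ else 0) := by
    intro μ
    by_cases h : IsHoriz n μ ∧ OrthP n μ ν'
    · obtain ⟨hh, ho⟩ := h
      obtain ⟨r, rfl, hr⟩ := horiz_struct hh
      have hSM : ν' ∈ SM r rᶜ k := by
        obtain ⟨ν₀, hvert, hsub, horth⟩ := ho
        refine mem_SM.mpr ⟨hν'.1, hν'.2.2, fun p hp => ?_⟩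
        exact pair_split (hν'.2.1 p hp) (horth r (by simp) p (hsub hp))
          (horth rᶜ (by simp) p (hsub hp))
      have hfe : V.filter (fun ν => IsHoriz n {r, rᶜ} ∧ Orth n {r, rᶜ} ν)
          = Finset.univ.filter (fun ν => IsVert n ν ∧ ν' ⊆ ν ∧ Orth n {r, rᶜ} ν) := by
        ext ν
        simp only [hV, Finset.mem_filter, Finset.mem_univ, true_and]
        constructor
        · rintro ⟨⟨h1, h2⟩, _, h3⟩; exact ⟨h1, h2, h3⟩
        · rintro ⟨h1, h2, h3⟩; exact ⟨⟨h1, h2⟩, hh, h3⟩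
      rw [hfe, ext_count hr hSM, if_pos ⟨hh, ho⟩]
    · have hemp : V.filter (fun ν => IsHoriz n μ ∧ Orth n μ ν) = ∅ := by
        rw [Finset.filter_eq_empty_iff]
        intro ν hν hcon
        apply h
        have hνV := Finset.mem_filter.mp hν
        exact ⟨hcon.1, ⟨ν, hνV.2.1, hνV.2.2, hcon.2⟩⟩
      rw [hemp, if_neg h]
      simp
  rw [Finset.sum_congr rfl (fun μ _ => key μ), ← Finset.mul_sum] at h0'
  have hfac : ((n - k).factorial : ℚ) ≠ 0 := by
    exact_mod_cast Nat.factorial_ne_zero _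
  have h2 := (mul_eq_zero.mp h0').resolve_left hfac
  rwa [← Finset.sum_filter] at h2

lemma firstHalf_card (n : ℕ) : (firstHalf n).card = n := by
  have h : ∀ m ∈ Finset.range n, m < 2 * n := fun m hm => by
    rw [Finset.mem_range] at hm; omega
  have he : firstHalf n = (Finset.range n).attachFin h := by
    ext x
    rw [Finset.mem_attachFin, Finset.mem_range, firstHalf, Finset.mem_filter]
    simp
  rw [he, Finset.card_attachFin, Finset.card_range]

lemma inter_firstHalf_sum {n : ℕ} {r : Finset (Fin (2*n))} :
    (r ∩ firstHalf n).card + (rᶜ ∩ firstHalf n).card = n := by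
  have h1 : rᶜ ∩ firstHalf n = firstHalf n \ r := by
    ext z
    simp only [Finset.mem_inter, Finset.mem_compl, Finset.mem_sdiff]
    tauto
  have h2 : r ∩ firstHalf n = firstHalf n ∩ r := Finset.inter_comm _ _
  rw [h1, h2, Finset.card_inter_add_card_sdiff, firstHalf_card]

lemma typeOf_pair {n : ℕ} (r : Finset (Fin (2*n))) :
    typeOf n {r, rᶜ} = max (r ∩ firstHalf n).card (rᶜ ∩ firstHalf n).card := by
  rw [typeOf, Finset.sup_insert, Finset.sup_singleton]

lemma typeOf_le {n : ℕ} (μ : Finset (Finset (Fin (2*n)))) : typeOf n μ ≤ n := by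
  apply Finset.sup_le
  intro r _
  calc (r ∩ firstHalf n).card ≤ (firstHalf n).card :=
        Finset.card_le_card Finset.inter_subset_right
    _ = n := firstHalf_card n

lemma coefset {n k : ℕ} {r : Finset (Fin (2*n))} (hr : r.card = n) :
    Finset.univ.filter (fun ν' => (IsPartial n k ν' ∧ ∀ p ∈ ν', p ⊆ firstHalf n)
        ∧ OrthP n {r, rᶜ} ν')
      = SM (r ∩ firstHalf n) (rᶜ ∩ firstHalf n) k := by
  ext ν'
  simp only [Finset.mem_filter, Finset.mem_univ, true_and]
  constructor
  · rintro ⟨⟨⟨h1, h2, h3⟩, hF⟩, ν₀, hvert, hsub, horth⟩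
    refine mem_SM.mpr ⟨h1, h3, fun p hp => ?_⟩
    obtain ⟨x, hx, y, hy, rfl⟩ := pair_split (h2 p hp) (horth r (by simp) p (hsub hp))
      (horth rᶜ (by simp) p (hsub hp))
    have hpF := hF _ hp
    exact ⟨x, Finset.mem_inter.mpr ⟨hx, hpF (by simp)⟩,
      y, Finset.mem_inter.mpr ⟨hy, hpF (by simp)⟩, rfl⟩
  · intro hν'
    obtain ⟨h1, h2, h3⟩ := mem_SM.mp hν'
    have hSMr : ν' ∈ SM r rᶜ k := mem_SM.mpr ⟨h1, h2, fun p hp => by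
      obtain ⟨x, hx, y, hy, rfl⟩ := h3 p hp
      exact ⟨x, (Finset.mem_inter.mp hx).1, y, (Finset.mem_inter.mp hy).1, rfl⟩⟩
    have hpart : IsPartial n k ν' := ⟨h1, fun p hp => by
      obtain ⟨x, hx, y, hy, rfl⟩ := h3 p hp
      exact Finset.card_pair (fun hxy => Finset.mem_compl.mp (Finset.mem_inter.mp hy).1
        (hxy ▸ (Finset.mem_inter.mp hx).1)), h2⟩
    refine ⟨⟨hpart, fun p hp => ?_⟩, ?_⟩
    · obtain ⟨x, hx, y, hy, rfl⟩ := h3 p hp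
      intro z hz
      simp only [Finset.mem_insert, Finset.mem_singleton] at hz
      rcases hz with rfl | rfl
      · exact (Finset.mem_inter.mp hx).2
      · exact (Finset.mem_inter.mp hy).2
    · have hpos : 0 < (Finset.univ.filter
          (fun ν => IsVert n ν ∧ ν' ⊆ ν ∧ Orth n {r, rᶜ} ν)).card := by
        rw [ext_count hr hSMr]
        exact Nat.factorial_pos _
      obtain ⟨ν, hν⟩ := Finset.card_pos.mp hpos
      have hm := Finset.mem_filter.mp hν
      exact ⟨ν, hm.2.1, hm.2.2.1, hm.2.2.2⟩

lemma Ek {n : ℕ} (τ : Finset (Finset (Fin (2*n))) → ℚ)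
    (hτ : ∀ ν, IsVert n ν →
      ∑ μ ∈ Finset.univ.filter (fun μ => IsHoriz n μ ∧ Orth n μ ν), τ μ = 0) (k : ℕ) :
    ∑ μ ∈ Finset.univ.filter (fun μ => IsHoriz n μ),
      ((k.factorial * (typeOf n μ).choose k * (n - typeOf n μ).choose k : ℕ) : ℚ) * τ μ
      = 0 := by
  classical
  set P := Finset.univ.filter
    (fun ν' => IsPartial n k ν' ∧ ∀ p ∈ ν', p ⊆ firstHalf n) with hP
  have h0 : ∑ ν' ∈ P,
      ∑ μ ∈ Finset.univ.filter (fun μ => IsHoriz n μ ∧ OrthP n μ ν'), τ μ = 0 :=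
    Finset.sum_eq_zero fun ν' hν' => partial_zero τ hτ (Finset.mem_filter.mp hν').2.1
  have hstep : ∀ ν' ∈ P,
      ∑ μ ∈ Finset.univ.filter (fun μ => IsHoriz n μ ∧ OrthP n μ ν'), τ μ
      = ∑ μ : Finset (Finset (Fin (2*n))),
          if IsHoriz n μ ∧ OrthP n μ ν' then τ μ else 0 :=
    fun ν' _ => Finset.sum_filter _ _
  rw [Finset.sum_congr rfl hstep, Finset.sum_comm] at h0
  have hstep2 : ∀ μ : Finset (Finset (Fin (2*n))),
      (∑ ν' ∈ P, if IsHoriz n μ ∧ OrthP n μ ν' then τ μ else 0)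
      = ((P.filter (fun ν' => IsHoriz n μ ∧ OrthP n μ ν')).card : ℚ) * τ μ := fun μ => by
    rw [← Finset.sum_filter, Finset.sum_const, nsmul_eq_mul]
  rw [Finset.sum_congr rfl (fun μ _ => hstep2 μ)] at h0
  have key : ∀ μ : Finset (Finset (Fin (2*n))),
      ((P.filter (fun ν' => IsHoriz n μ ∧ OrthP n μ ν')).card : ℚ) * τ μ
      = if IsHoriz n μ then
          ((k.factorial * (typeOf n μ).choose k * (n - typeOf n μ).choose k : ℕ) : ℚ) * τ μ
        else 0 := by
    intro μ
    by_cases hh : IsHoriz n μ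
    · rw [if_pos hh]
      obtain ⟨r, rfl, hr⟩ := horiz_struct hh
      have hPfilter : P.filter (fun ν' => IsHoriz n {r,rᶜ} ∧ OrthP n {r,rᶜ} ν')
          = SM (r ∩ firstHalf n) (rᶜ ∩ firstHalf n) k := by
        rw [← coefset hr]
        ext ν'
        simp only [hP, Finset.mem_filter, Finset.mem_univ, true_and]
        tauto
      rw [hPfilter]
      congr 2
      have hdisF : Disjoint (r ∩ firstHalf n) (rᶜ ∩ firstHalf n) :=
        (disjoint_compl_right).mono Finset.inter_subset_left Finset.inter_subset_left
      rw [SM_card (r ∩ firstHalf n).card (r ∩ firstHalf n) (rᶜ ∩ firstHalf n) hdisF rfl k]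
      have hsum := inter_firstHalf_sum (n := n) (r := r)
      have htp := typeOf_pair (n := n) r
      set x := (r ∩ firstHalf n).card with hx
      set y := (rᶜ ∩ firstHalf n).card with hy
      rcases Nat.le_total x y with hxy | hxy
      · have h1 : typeOf n {r, rᶜ} = y := by rw [htp]; exact max_eq_right hxy
        have h3 : n - y = x := by omega
        rw [h1, h3]
        ring
      · have h1 : typeOf n {r, rᶜ} = x := by rw [htp]; exact max_eq_left hxy
        have h3 : n - x = y := by omega
        rw [h1, h3]
    · rw [if_neg hh]
      have hemp : P.filter (fun ν' => IsHoriz n μ ∧ OrthP n μ ν') = ∅ := by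
        rw [Finset.filter_eq_empty_iff]
        exact fun ν' _ hcon => hh hcon.1
      rw [hemp]
      simp
  rw [Finset.sum_congr rfl (fun μ _ => key μ), ← Finset.sum_filter] at h0
  exact h0

theorem stmt6 (n : ℕ) (τ : Finset (Finset (Fin (2*n))) → ℚ)
    (hτ : ∀ ν, IsVert n ν →
      ∑ μ ∈ Finset.univ.filter (fun μ => IsHoriz n μ ∧ Orth n μ ν), τ μ = 0) :
    ∀ a, (n + 1) / 2 ≤ a → a ≤ n →
      ∑ μ ∈ Finset.univ.filter (fun μ => IsHoriz n μ ∧ typeOf n μ = a), τ μ = 0 := by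
  have hfiber : ∀ k : ℕ, ∑ a ∈ Finset.range (n+1),
      ((k.factorial * a.choose k * (n - a).choose k : ℕ) : ℚ) *
        (∑ μ ∈ Finset.univ.filter (fun μ => IsHoriz n μ ∧ typeOf n μ = a), τ μ) = 0 := by
    intro k
    have hmap : ∀ μ ∈ Finset.univ.filter (fun μ => IsHoriz n μ),
        typeOf n μ ∈ Finset.range (n+1) :=
      fun μ _ => Finset.mem_range.mpr (Nat.lt_succ_of_le (typeOf_le μ))
    have hfw := Finset.sum_fiberwise_of_maps_to hmap
      (fun μ => ((k.factorial * (typeOf n μ).choose k * (n - typeOf n μ).choose k : ℕ) : ℚ)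
        * τ μ)
    have hfw0 := hfw.trans (Ek τ hτ k)
    rw [← hfw0]
    refine Finset.sum_congr rfl fun a _ => ?_
    rw [Finset.mul_sum, Finset.filter_filter]
    refine Finset.sum_congr rfl fun μ hμ => ?_
    have htm := (Finset.mem_filter.mp hμ).2.2
    rw [htm]
  intro a
  induction a using Nat.strong_induction_on with
  | _ a IH =>
    intro ha1 ha2
    have hk := hfiber (n - a)
    have hmem : a ∈ Finset.range (n+1) := Finset.mem_range.mpr (by omega)
    have hzero : ∀ b ∈ Finset.range (n+1), b ≠ a →
        ((((n-a).factorial * b.choose (n-a) * (n - b).choose (n-a) : ℕ)) : ℚ) *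
          (∑ μ ∈ Finset.univ.filter (fun μ => IsHoriz n μ ∧ typeOf n μ = b), τ μ) = 0 := by
      intro b hb hba
      rw [Finset.mem_range] at hb
      rcases Nat.lt_or_ge b a with hlt | hge
      · rcases Nat.lt_or_ge b ((n+1)/2) with hsm | hbig
        · have hT : ∑ μ ∈ Finset.univ.filter
              (fun μ => IsHoriz n μ ∧ typeOf n μ = b), τ μ = 0 := by
            apply Finset.sum_eq_zero
            intro μ hμ
            exfalso
            obtain ⟨-, hhor, htyp⟩ := Finset.mem_filter.mp hμ
            obtain ⟨r, hre, hr⟩ := horiz_struct hhor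
            have htp := typeOf_pair (n := n) r
            have hsum := inter_firstHalf_sum (n := n) (r := r)
            have hxle : (r ∩ firstHalf n).card
                ≤ (r ∩ firstHalf n).card ⊔ (rᶜ ∩ firstHalf n).card := le_max_left _ _
            have hyle : (rᶜ ∩ firstHalf n).card
                ≤ (r ∩ firstHalf n).card ⊔ (rᶜ ∩ firstHalf n).card := le_max_right _ _
            rw [hre, htp] at htyp
            omega
          rw [hT, mul_zero]
        · rw [IH b hlt hbig (by omega), mul_zero]
      · have hch : (n - b).choose (n - a) = 0 := Nat.choose_eq_zero_of_lt (by omega)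
        rw [hch, Nat.mul_zero, Nat.cast_zero, zero_mul]
    have hsingle := Finset.sum_eq_single_of_mem a hmem hzero
    rw [hsingle] at hk
    have hcoefpos : 0 < (n-a).factorial * a.choose (n-a) * (n - a).choose (n-a) := by
      have h1 := Nat.factorial_pos (n-a)
      have h2 := Nat.choose_pos (show n - a ≤ a by omega)
      have h3 : 0 < (n-a).choose (n-a) := by rw [Nat.choose_self]; omega
      exact Nat.mul_pos (Nat.mul_pos h1 h2) h3
    have hcne : (((n-a).factorial * a.choose (n-a) * (n - a).choose (n-a) : ℕ) : ℚ) ≠ 0 := by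
      exact_mod_cast hcoefpos.ne'
    exact (mul_eq_zero.mp hk).resolve_left hcne
end

section
/- The rows of the orthogonality matrix K of shape 2×n are linearly independent over ℚ: if τ : H → ℚ satisfies, for every vertical tableau ν (perfect matching on {1,…,2n}), Σ_{μ ⊥ ν} τ(μ) = 0, then τ(μ) = 0 for all horizontal tableaux μ. -/
open scoped Classical
open Finset

lemma pd_pair {β : Type*} [DecidableEq β] {a b : Finset β} (h : Disjoint a b) :
    ({a, b} : Set (Finset β)).PairwiseDisjoint id := by
  intro u hu v hv huv
  simp only [Set.mem_insert_iff, Set.mem_singleton_iff] at hu hv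
  rcases hu with rfl | rfl <;> rcases hv with rfl | rfl
  · exact absurd rfl huv
  · exact h
  · exact h.symm
  · exact absurd rfl huv

lemma fcompl_ne_self {α : Type*} [Fintype α] [DecidableEq α] {B : Finset α}
    (hB : B.Nonempty) : B ≠ Bᶜ := by
  intro h
  obtain ⟨a, ha⟩ := hB
  exact (Finset.mem_compl.mp (h ▸ ha)) ha

lemma horiz_pair {n : ℕ} (hn : n ≠ 0) {B : Finset (Fin (2*n))} (hB : B.card = n) :
    IsHoriz n {B, Bᶜ} := by
  have hcard : Fintype.card (Fin (2*n)) = 2*n := Fintype.card_fin _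
  have hBc : Bᶜ.card = n := by rw [Finset.card_compl, hcard, hB]; omega
  have hne : B ≠ Bᶜ := fcompl_ne_self (Finset.card_pos.mp (by omega))
  refine ⟨Finset.card_pair hne, ?_, ?_, ?_⟩
  · intro r hr
    rcases Finset.mem_insert.mp hr with rfl | hr
    · exact hB
    · rw [Finset.mem_singleton.mp hr]; exact hBc
  · have h1 : (({B, Bᶜ} : Finset (Finset (Fin (2*n)))) : Set (Finset (Fin (2*n))))
        = {B, Bᶜ} := by simp
    rw [h1]; exact pd_pair disjoint_compl_right
  · rw [Finset.sup_insert, Finset.sup_singleton]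
    simpa using Finset.union_compl B

lemma horiz_rows_s7 {n : ℕ} {μ : Finset (Finset (Fin (2*n)))} (h : IsHoriz n μ) :
    ∃ B : Finset (Fin (2*n)), B.card = n ∧ μ = {B, Bᶜ} := by
  obtain ⟨a, b, hab, rfl⟩ := Finset.card_eq_two.mp h.1
  have hdisj : Disjoint a b := h.2.2.1 (by simp) (by simp) hab
  have hsup : a ⊔ b = ⊤ := by
    have h2 := h.2.2.2
    rw [Finset.sup_insert, Finset.sup_singleton] at h2
    rw [Finset.top_eq_univ]
    exact h2
  have hc : IsCompl a b := ⟨hdisj, codisjoint_iff.mpr hsup⟩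
  exact ⟨a, h.2.1 a (by simp), by rw [hc.symm.eq_compl]⟩

lemma horiz_mem {n : ℕ} {μ : Finset (Finset (Fin (2*n)))} (h : IsHoriz n μ)
    {B : Finset (Fin (2*n))} (hB : B ∈ μ) : μ = {B, Bᶜ} ∧ B.card = n := by
  obtain ⟨C, hC, rfl⟩ := horiz_rows_s7 h
  have hBc := h.2.1 B hB
  rcases Finset.mem_insert.mp hB with rfl | hB2
  · exact ⟨rfl, hBc⟩
  · have hBe : B = Cᶜ := Finset.mem_singleton.mp hB2
    subst hBe
    refine ⟨?_, hBc⟩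
    rw [compl_compl]
    exact Finset.pair_comm C Cᶜ

lemma inter_pair_card_le {α : Type*} [DecidableEq α] (r : Finset α) {w w' : α}
    (hw' : w' ∉ r) : (r ∩ {w, w'}).card ≤ 1 := by
  refine Finset.card_le_one.mpr ?_
  intro a ha b hb
  obtain ⟨ha1, ha2⟩ := Finset.mem_inter.mp ha
  obtain ⟨hb1, hb2⟩ := Finset.mem_inter.mp hb
  have haw : a = w := by
    rcases Finset.mem_insert.mp ha2 with h | h
    · exact h
    · rw [Finset.mem_singleton.mp h] at ha1; exact absurd ha1 hw'
  have hbw : b = w := by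
    rcases Finset.mem_insert.mp hb2 with h | h
    · exact h
    · rw [Finset.mem_singleton.mp h] at hb1; exact absurd hb1 hw'
  rw [haw, hbw]

lemma pairUp {α : Type*} [DecidableEq α] :
    ∀ (k : ℕ) (s : Finset α), s.card = 2*k →
    ∃ (ν : Finset (Finset α)) (t : Finset α),
      ν.card = k ∧ (∀ c ∈ ν, c.card = 2) ∧
      (↑ν : Set (Finset α)).PairwiseDisjoint id ∧
      ν.sup id = s ∧ t ⊆ s ∧ t.card = k ∧ ∀ c ∈ ν, (t ∩ c).card = 1 := by
  intro k
  induction k with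
  | zero =>
    intro s hs
    have hse : s = ∅ := Finset.card_eq_zero.mp (by simpa using hs)
    subst hse
    exact ⟨∅, ∅, rfl, by simp, by simp, by simp, by simp, rfl, by simp⟩
  | succ k ihk =>
    intro s hs
    obtain ⟨a, ha⟩ : s.Nonempty := Finset.card_pos.mp (by omega)
    obtain ⟨b, hb⟩ : (s.erase a).Nonempty := Finset.card_pos.mp
      (by rw [Finset.card_erase_of_mem ha]; omega)
    have hab : a ≠ b := fun h => (Finset.mem_erase.mp hb).1 h.symm
    set s'' := (s.erase a).erase b with hs''
    have hbs : b ∈ s := Finset.mem_of_mem_erase hb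
    have hcard'' : s''.card = 2*k := by
      rw [hs'', Finset.card_erase_of_mem hb, Finset.card_erase_of_mem ha]; omega
    obtain ⟨ν, t, hν1, hν2, hν3, hν4, ht1, ht2, ht3⟩ := ihk s'' hcard''
    have hsub'' : s'' ⊆ s := (Finset.erase_subset _ _).trans (Finset.erase_subset _ _)
    have hanot : a ∉ s'' := by simp [hs'', hab]
    have hbnot : b ∉ s'' := by simp [hs'']
    have hc_sub : ∀ c ∈ ν, c ⊆ s'' := by
      intro c hc
      have h1 : id c ≤ ν.sup id := Finset.le_sup hc
      rw [hν4] at h1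
      exact h1
    have habν : ({a, b} : Finset α) ∉ ν := fun h => hanot (hc_sub _ h (by simp))
    have hanott : a ∉ t := fun h => hanot (ht1 h)
    have hbnott : b ∉ t := fun h => hbnot (ht1 h)
    refine ⟨insert {a, b} ν, insert a t, ?_, ?_, ?_, ?_, ?_, ?_, ?_⟩
    · rw [Finset.card_insert_of_notMem habν, hν1]
    · intro c hc
      rcases Finset.mem_insert.mp hc with rfl | hc
      · exact Finset.card_pair hab
      · exact hν2 c hc
    · rw [Finset.coe_insert]
      refine Set.pairwiseDisjoint_insert.mpr ⟨hν3, ?_⟩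
      intro c hc _
      simp only [id]
      rw [Finset.disjoint_left]
      intro z hz hzc
      have hzs : z ∈ s'' := hc_sub c hc hzc
      rcases Finset.mem_insert.mp hz with rfl | hz
      · exact hanot hzs
      · rw [Finset.mem_singleton.mp hz] at hzs; exact hbnot hzs
    · rw [Finset.sup_insert, hν4]
      have h2 : ({a, b} : Finset α) ∪ s'' = insert a (insert b s'') := by
        ext z; simp [or_assoc]
      show ({a, b} : Finset α) ∪ s'' = s
      rw [h2, Finset.insert_erase hb, Finset.insert_erase ha]
    · exact Finset.insert_subset ha (ht1.trans hsub'')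
    · rw [Finset.card_insert_of_notMem hanott, ht2]
    · intro c hc
      rcases Finset.mem_insert.mp hc with rfl | hc
      · have h1 : insert a t ∩ {a, b} = {a} := by
          ext z
          simp only [Finset.mem_inter, Finset.mem_insert, Finset.mem_singleton]
          constructor
          · rintro ⟨h2, h3⟩
            rcases h3 with rfl | rfl
            · rfl
            · rcases h2 with h2 | h2
              · exact absurd h2.symm hab
              · exact absurd h2 hbnott
          · rintro rfl
            exact ⟨Or.inl rfl, Or.inl rfl⟩
        rw [h1, Finset.card_singleton]
      · have hac : a ∉ c := fun h => hanot (hc_sub c hc h)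
        rw [Finset.insert_inter_of_notMem hac]
        exact ht3 c hc

lemma swap_step (m : ℕ) (hm : m ≠ 0) (τ : Finset (Finset (Fin (2*(m+1)))) → ℚ)
    (hτ : ∀ ν, IsVert (m+1) ν →
      ∑ μ ∈ Finset.univ.filter (fun μ => IsHoriz (m+1) μ ∧ Orth (m+1) μ ν), τ μ = 0)
    (ih : ∀ σ : Finset (Finset (Fin (2*m))) → ℚ,
      (∀ ν, IsVert m ν →
        ∑ P ∈ Finset.univ.filter (fun P => IsHoriz m P ∧ Orth m P ν), σ P = 0) →
      ∀ P, IsHoriz m P → σ P = 0)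
    (A : Finset (Fin (2*(m+1)))) (x y : Fin (2*(m+1)))
    (hA : A.card = m+1) (hx : x ∈ A) (hy : y ∉ A) :
    τ {A, Aᶜ} + τ {insert y (A.erase x), (insert y (A.erase x))ᶜ} = 0 := by
  have hxy : x ≠ y := fun h => hy (h ▸ hx)
  set U : Finset (Fin (2*(m+1))) := ({x, y} : Finset _)ᶜ with hU
  have hUcard : U.card = 2*m := by
    rw [hU, Finset.card_compl, Finset.card_pair hxy, Fintype.card_fin]; omega
  set e := Finset.equivFinOfCardEq hUcard with he
  set ι : Fin (2*m) → Fin (2*(m+1)) := fun i => ((e.symm i : { z // z ∈ U }) : Fin (2*(m+1))) with hι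
  have hι_inj : Function.Injective ι := fun i j h => e.symm.injective (Subtype.ext h)
  have hι_mem : ∀ i, ι i ∈ U := fun i => (e.symm i).2
  have hι_surj : ∀ z ∈ U, ∃ i, ι i = z := by
    intro z hz
    exact ⟨e ⟨z, hz⟩, by simp [hι]⟩
  have hxU : x ∉ U := by simp [hU]
  have hyU : y ∉ U := by simp [hU]
  set J : Finset (Fin (2*m)) → Finset (Fin (2*(m+1))) := fun B => B.image ι with hJ
  have hJcard : ∀ B, (J B).card = B.card := fun B => Finset.card_image_of_injective _ hι_inj
  have hJsub : ∀ B, J B ⊆ U := by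
    intro B z hz
    obtain ⟨i, _, rfl⟩ := Finset.mem_image.mp hz
    exact hι_mem i
  have hJinter : ∀ B C, J (B ∩ C) = J B ∩ J C := fun B C => Finset.image_inter _ _ hι_inj
  have hJuniv : J Finset.univ = U := by
    apply Finset.eq_of_subset_of_card_le (hJsub _)
    rw [hJcard, Finset.card_univ, Fintype.card_fin, hUcard]
  have hJgen : ∀ C : Finset (Fin (2*(m+1))),
      J (Finset.univ.filter (fun i => ι i ∈ C)) = C ∩ U := by
    intro C
    ext z
    simp only [hJ, Finset.mem_image, Finset.mem_filter, Finset.mem_univ, true_and,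
      Finset.mem_inter]
    constructor
    · rintro ⟨i, hiC, rfl⟩
      exact ⟨hiC, hι_mem i⟩
    · rintro ⟨hzC, hzU⟩
      obtain ⟨i, rfl⟩ := hι_surj z hzU
      exact ⟨i, hzC, rfl⟩
  have hCU : ∀ C : Finset (Fin (2*(m+1))), x ∈ C → y ∉ C → C ∩ U = C.erase x := by
    intro C hxC hyC
    ext z
    rw [hU]
    simp only [Finset.mem_inter, Finset.mem_compl, Finset.mem_insert, Finset.mem_singleton,
      Finset.mem_erase]
    constructor
    · rintro ⟨h1, h2⟩
      push_neg at h2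
      exact ⟨h2.1, h1⟩
    · rintro ⟨h1, h2⟩
      refine ⟨h2, ?_⟩
      push_neg
      exact ⟨h1, fun h => absurd (h ▸ h2) hyC⟩
  have hCU' : ∀ C : Finset (Fin (2*(m+1))), y ∈ C → x ∉ C → C ∩ U = C.erase y := by
    intro C hyC hxC
    ext z
    rw [hU]
    simp only [Finset.mem_inter, Finset.mem_compl, Finset.mem_insert, Finset.mem_singleton,
      Finset.mem_erase]
    constructor
    · rintro ⟨h1, h2⟩
      push_neg at h2
      exact ⟨h2.2, h1⟩
    · rintro ⟨h1, h2⟩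
      refine ⟨h2, ?_⟩
      push_neg
      exact ⟨fun h => absurd (h ▸ h2) hxC, h1⟩
  have hfiltercompl : ∀ C : Finset (Fin (2*(m+1))),
      (Finset.univ.filter (fun i => ι i ∈ C))ᶜ = Finset.univ.filter (fun i => ι i ∈ Cᶜ) := by
    intro C
    ext i
    simp [Finset.mem_compl]
  set g : Finset (Fin (2*m)) → ℚ := fun B => τ {insert x (J B), insert y (J Bᶜ)} with hg
  set σ : Finset (Finset (Fin (2*m))) → ℚ := fun P => ∑ B ∈ P, g B with hσdef
  have hσ : ∀ ν, IsVert m ν →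
      ∑ P ∈ Finset.univ.filter (fun P => IsHoriz m P ∧ Orth m P ν), σ P = 0 := by
    intro ν hν
    set νt : Finset (Finset (Fin (2*(m+1)))) := insert {x, y} (ν.image J) with hνt
    have hvert : IsVert (m+1) νt := by
      refine ⟨?_, ?_, ?_⟩
      · intro c hc
        rcases Finset.mem_insert.mp hc with rfl | hc
        · exact Finset.card_pair hxy
        · obtain ⟨c₀, hc₀, rfl⟩ := Finset.mem_image.mp hc
          rw [hJcard]
          exact hν.1 c₀ hc₀
      · rw [hνt, Finset.coe_insert]
        refine Set.pairwiseDisjoint_insert.mpr ⟨?_, ?_⟩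
        · intro u hu v hv huv
          obtain ⟨c₀, hc₀, rfl⟩ := Finset.mem_image.mp (Finset.mem_coe.mp hu)
          obtain ⟨c₁, hc₁, rfl⟩ := Finset.mem_image.mp (Finset.mem_coe.mp hv)
          have hne : c₀ ≠ c₁ := fun h => huv (by rw [h])
          exact (Finset.disjoint_image hι_inj).mpr (hν.2.1 hc₀ hc₁ hne)
        · intro c hc _
          obtain ⟨c₀, hc₀, rfl⟩ := Finset.mem_image.mp (Finset.mem_coe.mp hc)
          simp only [id]
          rw [Finset.disjoint_left]
          intro z hz hzc
          have hzU := hJsub c₀ hzc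
          rcases Finset.mem_insert.mp hz with rfl | hz
          · exact hxU hzU
          · have hzy : z = y := Finset.mem_singleton.mp hz
            subst hzy
            exact hyU hzU
      · rw [hνt, Finset.sup_insert]
        have h1 : (ν.image J).sup id = J (ν.sup id) := by
          rw [Finset.sup_image]
          ext z
          simp only [Function.comp, id, hJ, Finset.mem_image, Finset.mem_sup]
          constructor
          · rintro ⟨c, hc, i, hi, rfl⟩
            exact ⟨i, ⟨c, hc, hi⟩, rfl⟩
          · rintro ⟨i, ⟨c, hc, hic⟩, rfl⟩
            exact ⟨c, hc, i, hic, rfl⟩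
        rw [h1, hν.2.2, hJuniv]
        show ({x, y} : Finset _) ∪ U = Finset.univ
        rw [hU, Finset.union_compl]
    have hBi : (Finset.univ.filter (fun P => IsHoriz m P ∧ Orth m P ν)).biUnion id
        = Finset.univ.filter
          (fun B : Finset (Fin (2*m)) => IsHoriz m {B, Bᶜ} ∧ Orth m {B, Bᶜ} ν) := by
      ext B
      simp only [Finset.mem_biUnion, Finset.mem_filter, Finset.mem_univ, true_and, id]
      constructor
      · rintro ⟨P, ⟨hP, hPo⟩, hBP⟩
        obtain ⟨hPe, -⟩ := horiz_mem hP hBP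
        rw [hPe] at hP hPo
        exact ⟨hP, hPo⟩
      · rintro ⟨h1, h2⟩
        exact ⟨{B, Bᶜ}, ⟨h1, h2⟩, by simp⟩
    have hPD : (↑(Finset.univ.filter (fun P => IsHoriz m P ∧ Orth m P ν)) :
        Set (Finset (Finset (Fin (2*m))))).PairwiseDisjoint id := by
      intro P hP Q hQ hPQ
      simp only [Finset.coe_filter, Set.mem_setOf_eq, Finset.mem_univ, true_and] at hP hQ
      rw [Function.onFun, id, id, Finset.disjoint_left]
      intro B hBP hBQ
      exact hPQ (((horiz_mem hP.1 hBP).1).trans ((horiz_mem hQ.1 hBQ).1).symm)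
    have hsum1 : ∑ B ∈ Finset.univ.filter
          (fun B : Finset (Fin (2*m)) => IsHoriz m {B, Bᶜ} ∧ Orth m {B, Bᶜ} ν), g B
        = ∑ P ∈ Finset.univ.filter (fun P => IsHoriz m P ∧ Orth m P ν), σ P := by
      rw [← hBi, Finset.sum_biUnion hPD]
      rfl
    have hmem2 : ∀ B : Finset (Fin (2*m)), B.card = m → Orth m {B, Bᶜ} ν →
        IsHoriz (m+1) {insert x (J B), insert y (J Bᶜ)} ∧
        Orth (m+1) {insert x (J B), insert y (J Bᶜ)} νt := by
      intro B hBc hBo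
      have hBcc : Bᶜ.card = m := by rw [Finset.card_compl, Fintype.card_fin, hBc]; omega
      have hxJB : x ∉ J B := fun h => hxU (hJsub _ h)
      have hxJBc : x ∉ J Bᶜ := fun h => hxU (hJsub _ h)
      have hyJB : y ∉ J B := fun h => hyU (hJsub _ h)
      have hyJBc : y ∉ J Bᶜ := fun h => hyU (hJsub _ h)
      have hR1c : (insert x (J B)).card = m+1 := by
        rw [Finset.card_insert_of_notMem hxJB, hJcard, hBc]
      have hR2c : (insert y (J Bᶜ)).card = m+1 := by
        rw [Finset.card_insert_of_notMem hyJBc, hJcard, hBcc]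
      have hR12 : insert x (J B) ≠ insert y (J Bᶜ) := by
        intro h
        have hx2 : x ∈ insert y (J Bᶜ) := h ▸ Finset.mem_insert_self x (J B)
        rcases Finset.mem_insert.mp hx2 with h' | h'
        · exact hxy h'
        · exact hxJBc h'
      have hdisjJ : Disjoint (J B) (J Bᶜ) :=
        (Finset.disjoint_image hι_inj).mpr disjoint_compl_right
      have hdisjR : Disjoint (insert x (J B)) (insert y (J Bᶜ)) := by
        rw [Finset.disjoint_left]
        intro z hz hz2
        rcases Finset.mem_insert.mp hz with rfl | hz
        · rcases Finset.mem_insert.mp hz2 with h' | h'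
          · exact hxy h'
          · exact hxJBc h'
        · rcases Finset.mem_insert.mp hz2 with rfl | h'
          · exact hyJB hz
          · exact (Finset.disjoint_left.mp hdisjJ hz) h'
      have hsupR : insert x (J B) ∪ insert y (J Bᶜ) = Finset.univ := by
        rw [Finset.eq_univ_iff_forall]
        intro z
        by_cases hzU : z ∈ U
        · rw [← hJuniv] at hzU
          obtain ⟨i, -, rfl⟩ := Finset.mem_image.mp hzU
          by_cases hiB : i ∈ B
          · exact Finset.mem_union_left _
              (Finset.mem_insert_of_mem (Finset.mem_image_of_mem ι hiB))
          · exact Finset.mem_union_right _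
              (Finset.mem_insert_of_mem (Finset.mem_image_of_mem ι (Finset.mem_compl.mpr hiB)))
        · rw [hU] at hzU
          simp only [Finset.mem_compl, not_not] at hzU
          rcases Finset.mem_insert.mp hzU with rfl | hzy
          · exact Finset.mem_union_left _ (Finset.mem_insert_self _ _)
          · rw [Finset.mem_singleton.mp hzy]
            exact Finset.mem_union_right _ (Finset.mem_insert_self _ _)
      constructor
      · refine ⟨Finset.card_pair hR12, ?_, ?_, ?_⟩
        · intro r hr
          rcases Finset.mem_insert.mp hr with rfl | hr
          · exact hR1c
          · rw [Finset.mem_singleton.mp hr]; exact hR2c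
        · have h1 : ((({insert x (J B), insert y (J Bᶜ)} : Finset (Finset (Fin (2*(m+1)))))) :
              Set (Finset (Fin (2*(m+1))))) = {insert x (J B), insert y (J Bᶜ)} := by simp
          rw [h1]
          exact pd_pair hdisjR
        · rw [Finset.sup_insert, Finset.sup_singleton]
          exact hsupR
      · intro r hr c hc
        have hrcases := Finset.mem_insert.mp hr
        rcases Finset.mem_insert.mp hc with rfl | hc
        · rcases hrcases with rfl | hr2
          · exact inter_pair_card_le _ (fun h => hyJB (Finset.mem_of_mem_insert_of_ne h hxy.symm))
          · rw [Finset.mem_singleton.mp hr2, Finset.pair_comm x y]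
            refine inter_pair_card_le _ ?_
            intro h
            rcases Finset.mem_insert.mp h with h' | h'
            · exact hxy h'
            · exact hxJBc h'
        · obtain ⟨c₀, hc₀, rfl⟩ := Finset.mem_image.mp hc
          have hxc : x ∉ J c₀ := fun h => hxU (hJsub _ h)
          have hyc : y ∉ J c₀ := fun h => hyU (hJsub _ h)
          rcases hrcases with rfl | hr2
          · rw [Finset.insert_inter_of_notMem hxc, ← hJinter, hJcard]
            exact hBo B (Finset.mem_insert_self _ _) c₀ hc₀
          · rw [Finset.mem_singleton.mp hr2]
            rw [Finset.insert_inter_of_notMem hyc, ← hJinter, hJcard]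
            exact hBo Bᶜ (by simp) c₀ hc₀
    have hsum2 : ∑ B ∈ Finset.univ.filter
          (fun B : Finset (Fin (2*m)) => IsHoriz m {B, Bᶜ} ∧ Orth m {B, Bᶜ} ν), g B
        = ∑ μ ∈ Finset.univ.filter (fun μ => IsHoriz (m+1) μ ∧ Orth (m+1) μ νt), τ μ := by
      refine Finset.sum_bij (fun B _ => {insert x (J B), insert y (J Bᶜ)}) ?_ ?_ ?_ ?_
      · intro B hB
        simp only [Finset.mem_filter, Finset.mem_univ, true_and] at hB
        have hBc : B.card = m := (horiz_mem hB.1 (Finset.mem_insert_self _ _)).2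
        obtain ⟨h1, h2⟩ := hmem2 B hBc hB.2
        simp only [Finset.mem_filter, Finset.mem_univ, true_and]
        exact ⟨h1, h2⟩
      · intro B₁ h₁ B₂ h₂ heq
        have hx1 : insert x (J B₁) = insert x (J B₂) := by
          have hmem1 : insert x (J B₁)
              ∈ ({insert x (J B₂), insert y (J B₂ᶜ)} : Finset (Finset (Fin (2*(m+1))))) := by
            rw [← heq]
            exact Finset.mem_insert_self _ _
          rcases Finset.mem_insert.mp hmem1 with h | h
          · exact h
          · exfalso
            have hx2 : x ∈ insert y (J B₂ᶜ) :=
              (Finset.mem_singleton.mp h) ▸ Finset.mem_insert_self x (J B₁)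
            rcases Finset.mem_insert.mp hx2 with h' | h'
            · exact hxy h'
            · exact hxU (hJsub _ h')
        have hJ12 : J B₁ = J B₂ := by
          have e1 : J B₁ = (insert x (J B₁)).erase x :=
            (Finset.erase_insert (fun h => hxU (hJsub _ h))).symm
          rw [e1, hx1, Finset.erase_insert (fun h => hxU (hJsub _ h))]
        exact Finset.image_injective hι_inj hJ12
      · intro μ hμ
        simp only [Finset.mem_filter, Finset.mem_univ, true_and] at hμ
        obtain ⟨hμh, hμo⟩ := hμ
        obtain ⟨C, hCc, rfl⟩ := horiz_rows_s7 hμh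
        have hxyν : ({x, y} : Finset (Fin (2*(m+1)))) ∈ νt := Finset.mem_insert_self _ _
        obtain ⟨C', hC'x, hC'mem, hC'eq⟩ : ∃ C', x ∈ C' ∧ C' ∈ ({C, Cᶜ} : Finset _) ∧
            ({C, Cᶜ} : Finset (Finset (Fin (2*(m+1))))) = {C', C'ᶜ} := by
          by_cases hxC : x ∈ C
          · exact ⟨C, hxC, Finset.mem_insert_self _ _, rfl⟩
          · refine ⟨Cᶜ, Finset.mem_compl.mpr hxC, by simp, ?_⟩
            rw [compl_compl]
            exact Finset.pair_comm C Cᶜ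
        have hC'card : C'.card = m+1 := hμh.2.1 C' hC'mem
        have hyC' : y ∉ C' := by
          intro hyC'
          have h1 := hμo C' hC'mem {x, y} hxyν
          have h2 : ({x, y} : Finset (Fin (2*(m+1)))) ⊆ C' := by
            intro z hz
            rcases Finset.mem_insert.mp hz with rfl | hz
            · exact hC'x
            · rw [Finset.mem_singleton.mp hz]; exact hyC'
          rw [Finset.inter_eq_right.mpr h2, Finset.card_pair hxy] at h1
          omega
        have hJB : J (Finset.univ.filter (fun i => ι i ∈ C')) = C'.erase x := by
          rw [hJgen, hCU C' hC'x hyC']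
        have hxCc : x ∉ C'ᶜ := by simp [hC'x]
        have hyCc : y ∈ C'ᶜ := Finset.mem_compl.mpr hyC'
        have hJBc : J (Finset.univ.filter (fun i => ι i ∈ C'))ᶜ = C'ᶜ.erase y := by
          rw [hfiltercompl, hJgen, hCU' C'ᶜ hyCc hxCc]
        have hins1 : insert x (J (Finset.univ.filter (fun i => ι i ∈ C'))) = C' := by
          rw [hJB, Finset.insert_erase hC'x]
        have hins2 : insert y (J (Finset.univ.filter (fun i => ι i ∈ C'))ᶜ) = C'ᶜ := by
          rw [hJBc, Finset.insert_erase hyCc]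
        have hBcard : (Finset.univ.filter (fun i => ι i ∈ C')).card = m := by
          have h3 := hJcard (Finset.univ.filter (fun i => ι i ∈ C'))
          rw [hJB, Finset.card_erase_of_mem hC'x, hC'card] at h3
          omega
        have hC'cmem : C'ᶜ ∈ ({C, Cᶜ} : Finset (Finset (Fin (2*(m+1))))) := by
          rw [hC'eq]; simp
        refine ⟨Finset.univ.filter (fun i => ι i ∈ C'), ?_, ?_⟩
        · simp only [Finset.mem_filter, Finset.mem_univ, true_and]
          refine ⟨horiz_pair hm hBcard, ?_⟩
          intro r hr c hc
          have hJc : J c ∈ νt := Finset.mem_insert_of_mem (Finset.mem_image_of_mem J hc)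
          rcases Finset.mem_insert.mp hr with rfl | hr2
          · have hcard_eq : ((Finset.univ.filter (fun i => ι i ∈ C')) ∩ c).card
                = (J (Finset.univ.filter (fun i => ι i ∈ C')) ∩ J c).card := by
              rw [← hJinter, hJcard]
            rw [hcard_eq]
            calc (J (Finset.univ.filter (fun i => ι i ∈ C')) ∩ J c).card
                ≤ (C' ∩ J c).card := by
                  apply Finset.card_le_card
                  apply Finset.inter_subset_inter _ le_rfl
                  rw [hJB]
                  exact Finset.erase_subset _ _
              _ ≤ 1 := hμo C' hC'mem (J c) hJc
          · rw [Finset.mem_singleton.mp hr2]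
            have hcard_eq : ((Finset.univ.filter (fun i => ι i ∈ C'))ᶜ ∩ c).card
                = (J (Finset.univ.filter (fun i => ι i ∈ C'))ᶜ ∩ J c).card := by
              rw [← hJinter, hJcard]
            rw [hcard_eq]
            calc (J (Finset.univ.filter (fun i => ι i ∈ C'))ᶜ ∩ J c).card
                ≤ (C'ᶜ ∩ J c).card := by
                  apply Finset.card_le_card
                  apply Finset.inter_subset_inter _ le_rfl
                  rw [hJBc]
                  exact Finset.erase_subset _ _
              _ ≤ 1 := hμo C'ᶜ hC'cmem (J c) hJc
        · beta_reduce
          rw [hins1, hins2, ← hC'eq]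
      · intro B hB
        rfl
    rw [← hsum1, hsum2]
    exact hτ νt hvert
  have hB₀J : J (Finset.univ.filter (fun i => ι i ∈ A)) = A.erase x := by
    rw [hJgen, hCU A hx hy]
  have hyA : y ∈ Aᶜ := Finset.mem_compl.mpr hy
  have hxA : x ∉ Aᶜ := by simp [hx]
  have hB₀Jc : J (Finset.univ.filter (fun i => ι i ∈ A))ᶜ = Aᶜ.erase y := by
    rw [hfiltercompl, hJgen, hCU' Aᶜ hyA hxA]
  have hB₀card : (Finset.univ.filter (fun i => ι i ∈ A)).card = m := by
    have h3 := hJcard (Finset.univ.filter (fun i => ι i ∈ A))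
    rw [hB₀J, Finset.card_erase_of_mem hx, hA] at h3
    omega
  have hP₀ : IsHoriz m {(Finset.univ.filter (fun i => ι i ∈ A)),
      (Finset.univ.filter (fun i => ι i ∈ A))ᶜ} := horiz_pair hm hB₀card
  have hzero := ih σ hσ _ hP₀
  have hne : (Finset.univ.filter (fun i => ι i ∈ A))
      ≠ (Finset.univ.filter (fun i => ι i ∈ A))ᶜ :=
    fcompl_ne_self (Finset.card_pos.mp (by omega))
  rw [show σ {(Finset.univ.filter (fun i => ι i ∈ A)),
      (Finset.univ.filter (fun i => ι i ∈ A))ᶜ}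
      = g (Finset.univ.filter (fun i => ι i ∈ A))
        + g (Finset.univ.filter (fun i => ι i ∈ A))ᶜ from Finset.sum_pair hne] at hzero
  have hg1 : g (Finset.univ.filter (fun i => ι i ∈ A)) = τ {A, Aᶜ} := by
    rw [hg]
    show τ _ = τ _
    congr 1
    rw [hB₀J, hB₀Jc, Finset.insert_erase hx, Finset.insert_erase hyA]
  have hg2 : g (Finset.univ.filter (fun i => ι i ∈ A))ᶜ
      = τ {insert y (A.erase x), (insert y (A.erase x))ᶜ} := by
    rw [hg]
    show τ _ = τ _
    congr 1
    rw [compl_compl, hB₀Jc, hB₀J]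
    have hAc' : insert x (Aᶜ.erase y) = (insert y (A.erase x))ᶜ := by
      ext z
      simp only [Finset.mem_insert, Finset.mem_erase, Finset.mem_compl, not_or, not_and, not_not]
      constructor
      · rintro (rfl | ⟨h1, h2⟩)
        · exact ⟨hxy, fun h => absurd rfl h⟩
        · exact ⟨h1, fun _ => h2⟩
      · rintro ⟨h1, h2⟩
        by_cases hzx : z = x
        · exact Or.inl hzx
        · exact Or.inr ⟨h1, h2 hzx⟩
    rw [hAc', Finset.pair_comm]
  rw [hg1, hg2] at hzero
  exact hzero

set_option maxHeartbeats 2000000 in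
theorem stmt7 (n : ℕ) (τ : Finset (Finset (Fin (2*n))) → ℚ)
    (hτ : ∀ ν, IsVert n ν →
      ∑ μ ∈ Finset.univ.filter (fun μ => IsHoriz n μ ∧ Orth n μ ν), τ μ = 0) :
    ∀ μ, IsHoriz n μ → τ μ = 0 := by
  induction n with
  | zero =>
    intro μ hμ
    exfalso
    have h1 : μ ⊆ {∅} := by
      intro r hr
      have h2 := hμ.2.1 r hr
      simp [Finset.card_eq_zero.mp h2]
    have h3 := Finset.card_le_card h1
    rw [hμ.1, Finset.card_singleton] at h3
    omega
  | succ m ih =>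
    rcases Nat.eq_zero_or_pos m with rfl | hm
    · -- n = 1 case
      intro μ hμ
      obtain ⟨A, hA, rfl⟩ := horiz_rows_s7 hμ
      have hν : IsVert 1 {(Finset.univ : Finset (Fin (2*1)))} := by
        refine ⟨?_, ?_, ?_⟩
        · intro c hc
          rw [Finset.mem_singleton.mp hc, Finset.card_univ, Fintype.card_fin]
        · simp
        · simp
      have h0 := hτ _ hν
      have hfil : Finset.univ.filter
          (fun μ' => IsHoriz 1 μ' ∧ Orth 1 μ' {Finset.univ}) = {({A, Aᶜ} : Finset _)} := by
        ext μ'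
        simp only [Finset.mem_filter, Finset.mem_univ, true_and, Finset.mem_singleton]
        constructor
        · rintro ⟨h1, h2⟩
          obtain ⟨B, hB, rfl⟩ := horiz_rows_s7 h1
          obtain ⟨a, ha⟩ := Finset.card_eq_one.mp hA
          obtain ⟨b, hb⟩ := Finset.card_eq_one.mp hB
          subst ha; subst hb
          by_cases hab : b = a
          · subst hab; rfl
          · have hBA : ({b} : Finset (Fin (2*1))) = ({a} : Finset (Fin (2*1)))ᶜ := by
              apply Finset.eq_of_subset_of_card_le
              · intro z hz
                rw [Finset.mem_singleton.mp hz]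
                simp [hab]
              · rw [Finset.card_compl, Fintype.card_fin, Finset.card_singleton]
                simp
            rw [hBA, compl_compl, Finset.pair_comm]
        · rintro rfl
          refine ⟨hμ, ?_⟩
          intro r hr c hc
          rw [Finset.mem_singleton.mp hc, Finset.inter_univ, hμ.2.1 r hr]
      rw [hfil, Finset.sum_singleton] at h0
      exact h0
    · -- m ≥ 1
      have hswap := fun A x y hA hx hy =>
        swap_step m (by omega) τ hτ ih A x y hA hx hy
      have hrel : ∀ d (A B : Finset (Fin (2*(m+1)))), A.card = m+1 → B.card = m+1 →
          (B \ A).card = d → τ {B, Bᶜ} = (-1)^d * τ {A, Aᶜ} := by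
        intro d
        induction d with
        | zero =>
          intro A B hA hB h0
          have he : B \ A = ∅ := Finset.card_eq_zero.mp h0
          have hBA : B ⊆ A := by
            intro z hz
            by_contra hzA
            have hzm : z ∈ B \ A := Finset.mem_sdiff.mpr ⟨hz, hzA⟩
            rw [he] at hzm
            exact absurd hzm (Finset.notMem_empty z)
          have hBA2 : B = A := Finset.eq_of_subset_of_card_le hBA (by omega)
          rw [hBA2, pow_zero, one_mul]
        | succ d ihd =>
          intro A B hA hB hcard
          have hABcard : (A \ B).card = d+1 := by
            rw [Finset.card_sdiff_comm (by omega : A.card = B.card)]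
            exact hcard
          obtain ⟨xx, hxx⟩ : (A \ B).Nonempty := Finset.card_pos.mp (by omega)
          obtain ⟨yy, hyy⟩ : (B \ A).Nonempty := Finset.card_pos.mp (by omega)
          obtain ⟨hxA, hxB⟩ := Finset.mem_sdiff.mp hxx
          obtain ⟨hyB, hyA⟩ := Finset.mem_sdiff.mp hyy
          have hA'card : (insert yy (A.erase xx)).card = m+1 := by
            rw [Finset.card_insert_of_notMem
              (fun h => hyA (Finset.mem_of_mem_erase h)),
              Finset.card_erase_of_mem hxA, hA]
            omega
          have hsw := hswap A xx yy hA hxA hyA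
          have hBA' : B \ (insert yy (A.erase xx)) = (B \ A).erase yy := by
            ext z
            simp only [Finset.mem_sdiff, Finset.mem_insert, Finset.mem_erase,
              not_or, not_and, not_not]
            constructor
            · rintro ⟨hzB, hzy, hz3⟩
              have hzx : z ≠ xx := fun h => hxB (h ▸ hzB)
              exact ⟨hzy, hzB, hz3 hzx⟩
            · rintro ⟨hzy, hzB, hzA2⟩
              exact ⟨hzB, hzy, fun _ => hzA2⟩
          have hstep : (B \ (insert yy (A.erase xx))).card = d := by
            rw [hBA', Finset.card_erase_of_mem hyy, hcard]
            omega
          have hres := ihd (insert yy (A.erase xx)) B hA'card hB hstep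
          rw [hres]
          have hAA' : τ {insert yy (A.erase xx), (insert yy (A.erase xx))ᶜ}
              = - τ {A, Aᶜ} := by linarith
          rw [hAA']
          ring
      intro μ hμ
      obtain ⟨A, hA, rfl⟩ := horiz_rows_s7 hμ
      have hAc : Aᶜ.card = m+1 := by
        rw [Finset.card_compl, Fintype.card_fin, hA]; omega
      rcases Nat.even_or_odd (m+1) with heven | hodd
      · -- even case
        obtain ⟨k, hk⟩ := heven
        obtain ⟨νA, tA, hνA1, hνA2, hνA3, hνA4, htA1, htA2, htA3⟩ :=
          pairUp k A (by omega)
        obtain ⟨νB, tB, hνB1, hνB2, hνB3, hνB4, htB1, htB2, htB3⟩ :=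
          pairUp k Aᶜ (by omega)
        have hsubA : ∀ c ∈ νA, c ⊆ A := by
          intro c hc
          have h1 : id c ≤ νA.sup id := Finset.le_sup hc
          rwa [hνA4] at h1
        have hsubB : ∀ c ∈ νB, c ⊆ Aᶜ := by
          intro c hc
          have h1 : id c ≤ νB.sup id := Finset.le_sup hc
          rwa [hνB4] at h1
        have hvert : IsVert (m+1) (νA ∪ νB) := by
          refine ⟨?_, ?_, ?_⟩
          · intro c hc
            rcases Finset.mem_union.mp hc with hc | hc
            exacts [hνA2 c hc, hνB2 c hc]
          · rw [Finset.coe_union]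
            intro u hu v hv huv
            simp only [Set.mem_union, Finset.mem_coe] at hu hv
            rcases hu with hu | hu <;> rcases hv with hv | hv
            · exact hνA3 hu hv huv
            · exact disjoint_compl_right.mono (hsubA u hu) (hsubB v hv)
            · exact disjoint_compl_left.mono (hsubB u hu) (hsubA v hv)
            · exact hνB3 hu hv huv
          · rw [Finset.sup_union, hνA4, hνB4]
            simpa using Finset.union_compl A
        have h0 := hτ _ hvert
        have hdecomp2 : ∀ (B c : Finset (Fin (2*(m+1)))), c.card = 2 →
            (B ∩ c).card + (Bᶜ ∩ c).card = 2 := by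
          intro B c hc2
          have hdec : (B ∩ c) ∪ (Bᶜ ∩ c) = c := by
            ext z
            simp only [Finset.mem_union, Finset.mem_inter, Finset.mem_compl]
            tauto
          have hdisj2 : Disjoint (B ∩ c) (Bᶜ ∩ c) := by
            apply Finset.disjoint_left.mpr
            intro z hz hz2
            exact (Finset.mem_compl.mp (Finset.mem_inter.mp hz2).1)
              (Finset.mem_inter.mp hz).1
          calc (B ∩ c).card + (Bᶜ ∩ c).card
              = ((B ∩ c) ∪ (Bᶜ ∩ c)).card := (Finset.card_union_of_disjoint hdisj2).symm
            _ = c.card := by rw [hdec]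
            _ = 2 := hc2
        have hconst : ∀ μ' ∈ Finset.univ.filter
            (fun μ' => IsHoriz (m+1) μ' ∧ Orth (m+1) μ' (νA ∪ νB)),
            τ μ' = (-1)^k * τ {A, Aᶜ} := by
          intro μ' hμ'
          simp only [Finset.mem_filter, Finset.mem_univ, true_and] at hμ'
          obtain ⟨hμ'h, hμ'o⟩ := hμ'
          obtain ⟨B, hBcard, rfl⟩ := horiz_rows_s7 hμ'h
          have hone : ∀ c ∈ νA, (B ∩ c).card = 1 := by
            intro c hc
            have h1 := hμ'o B (Finset.mem_insert_self _ _) c (Finset.mem_union_left _ hc)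
            have h2 := hμ'o Bᶜ (by simp) c (Finset.mem_union_left _ hc)
            have h3 := hdecomp2 B c (hνA2 c hc)
            omega
          have hBA : (B ∩ A).card = k := by
            have hAbi : A = νA.biUnion id := by rw [← Finset.sup_eq_biUnion, hνA4]
            have hbi : B ∩ A = νA.biUnion (fun c => B ∩ c) := by
              conv_lhs => rw [hAbi]
              ext z
              simp only [Finset.mem_inter, Finset.mem_biUnion, id]
              tauto
            rw [hbi, Finset.card_biUnion]
            · rw [Finset.sum_congr rfl hone, Finset.sum_const, hνA1, smul_eq_mul, mul_one]
            · intro c₁ h₁ c₂ h₂ hne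
              exact (hνA3 h₁ h₂ hne).mono Finset.inter_subset_right Finset.inter_subset_right
          have hBsd : (B \ A).card = k := by
            have h4 := Finset.card_inter_add_card_sdiff B A
            omega
          exact hrel k A B hA hBcard hBsd
        have h0' : ((Finset.univ.filter
            (fun μ' => IsHoriz (m+1) μ' ∧ Orth (m+1) μ' (νA ∪ νB))).card : ℚ)
            * ((-1)^k * τ {A, Aᶜ}) = 0 := by
          rw [← h0, Finset.sum_congr rfl hconst, Finset.sum_const, nsmul_eq_mul]
        have htdisj : Disjoint tA tB := disjoint_compl_right.mono htA1 htB1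
        have htcard : (tA ∪ tB).card = m+1 := by
          rw [Finset.card_union_of_disjoint htdisj, htA2, htB2]; omega
        have hcross : ∀ c ∈ νA ∪ νB, ((tA ∪ tB) ∩ c).card = 1 := by
          intro c hc
          rcases Finset.mem_union.mp hc with hc | hc
          · have h1 : (tA ∪ tB) ∩ c = tA ∩ c := by
              rw [Finset.union_inter_distrib_right]
              have h2 : tB ∩ c = ∅ := by
                rw [← Finset.disjoint_iff_inter_eq_empty]
                exact disjoint_compl_left.mono htB1 (hsubA c hc)
              rw [h2, Finset.union_empty]
            rw [h1]; exact htA3 c hc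
          · have h1 : (tA ∪ tB) ∩ c = tB ∩ c := by
              rw [Finset.union_inter_distrib_right]
              have h2 : tA ∩ c = ∅ := by
                rw [← Finset.disjoint_iff_inter_eq_empty]
                exact disjoint_compl_right.mono htA1 (hsubB c hc)
              rw [h2, Finset.empty_union]
            rw [h1]; exact htB3 c hc
        have hmemS : ({tA ∪ tB, (tA ∪ tB)ᶜ} : Finset (Finset (Fin (2*(m+1)))))
            ∈ Finset.univ.filter
              (fun μ' => IsHoriz (m+1) μ' ∧ Orth (m+1) μ' (νA ∪ νB)) := by
          simp only [Finset.mem_filter, Finset.mem_univ, true_and]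
          refine ⟨horiz_pair (by omega) htcard, ?_⟩
          intro r hr c hc
          have h1 := hcross c hc
          have h2 := hdecomp2 (tA ∪ tB) c (hvert.1 c hc)
          rcases Finset.mem_insert.mp hr with rfl | hr
          · omega
          · rw [Finset.mem_singleton.mp hr]
            omega
        have hSc : (Finset.univ.filter
            (fun μ' => IsHoriz (m+1) μ' ∧ Orth (m+1) μ' (νA ∪ νB))).card ≠ 0 :=
          Finset.card_ne_zero_of_mem hmemS
        rcases mul_eq_zero.mp h0' with h | h
        · exact absurd (by exact_mod_cast h) hSc
        · rcases mul_eq_zero.mp h with h | h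
          · exact absurd h (pow_ne_zero _ (by norm_num))
          · exact h
      · -- odd case
        have hsd : (Aᶜ \ A).card = m+1 := by
          rw [Finset.sdiff_eq_self_of_disjoint disjoint_compl_left]
          exact hAc
        have h1 := hrel (m+1) A Aᶜ hA hAc hsd
        rw [compl_compl, Finset.pair_comm, Odd.neg_one_pow hodd] at h1
        linarith
end
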